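/- arXiv:2003.04392 — 13 statements merged into one kernel-verified Lean document; each statement's English description precedes it below -/
import Mathlib

section
/- Let k ≥ 1 and n = 2^k, and let c : Z_n → {black, white} be a good coloring, i.e., c(a) ≠ c(a + n/2) for all a in Z_n. For any integers a, b, consider the arithmetic progression a, a+b, ..., a+(n-1)b reduced modulo n. Then the number of terms colored black equals the number of terms colored white, unless n divides b, in which case all n terms have the same color; in either case the number of black terms minus the number of white terms is a multiple of n (in Z). -/
/-!
If `2 ^ k ∤ b`, then `gcd(b, 2 ^ k)` is a proper divisor of `2 ^ k`, hence divides `2 ^ (k - 1)`,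
and Bézout gives `t` with `t * b ≡ 2 ^ (k - 1) (mod 2 ^ k)`. Shifting the index of the progression
by `t` therefore moves every term by half the modulus, which flips its colour: translation by `t`
is a bijection between the black and the white terms.
-/

open Finset

theorem Finset.card_filter_eq_true_eq_card_filter_eq_false {α : Type*} [Fintype α]
    (c : α → Bool) (e : α ≃ α) (he : ∀ x, c (e x) = !c x) :
    #{x | c x = true} = #{x | c x = false} :=
  card_equiv e fun x => by simp [he]

namespace ZMod

theorem card_filter_range_natCast {n : ℕ} [NeZero n] (p : ZMod n → Prop) [DecidablePred p] :
    #((range n).filter fun i : ℕ => p i) = #{x : ZMod n | p x} := by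
  refine card_bij' (fun i _ => (i : ZMod n)) (fun x _ => x.val) ?_ ?_ ?_ ?_
  · intro i hi
    simpa using (mem_filter.1 hi).2
  · intro x hx
    simpa [val_lt] using (mem_filter.1 hx).2
  · intro i hi
    exact val_cast_of_lt (mem_range.1 (mem_filter.1 hi).1)
  · intro x _
    exact natCast_zmod_val x

theorem exists_mul_eq_natCast_of_gcd_dvd {n : ℕ} [NeZero n] (x : ZMod n) {d : ℕ}
    (hd : Nat.gcd x.val n ∣ d) : ∃ t : ZMod n, t * x = d := by
  obtain ⟨q, rfl⟩ := hd
  have hbezout : ((Nat.gcd x.val n : ℤ) : ZMod n) = x * Nat.gcdA x.val n := by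
    rw [Nat.gcd_eq_gcd_ab]
    push_cast
    rw [natCast_self, natCast_zmod_val]
    ring
  refine ⟨(Nat.gcdA x.val n : ZMod n) * q, ?_⟩
  push_cast at hbezout ⊢
  rw [hbezout]
  ring

theorem gcd_val_dvd_prime_pow_pred {p k : ℕ} (hp : p.Prime) {x : ZMod (p ^ k)} (hx : x ≠ 0) :
    Nat.gcd x.val (p ^ k) ∣ p ^ (k - 1) := by
  have : NeZero (p ^ k) := ⟨pow_ne_zero k hp.ne_zero⟩
  obtain ⟨v, hvk, hv⟩ := (Nat.dvd_prime_pow hp).1 (Nat.gcd_dvd_right x.val (p ^ k))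
  have hv_ne : v ≠ k := by
    intro hv_eq
    rw [hv_eq] at hv
    have hdvd : p ^ k ∣ x.val := (dvd_of_eq hv.symm).trans (Nat.gcd_dvd_left _ _)
    exact hx (val_eq_zero x |>.1 (Nat.eq_zero_of_dvd_of_lt hdvd (val_lt x)))
  rw [hv]
  exact pow_dvd_pow p (by omega)

end ZMod

theorem card_filter_progression_eq_true_eq_false {k : ℕ} (c : ZMod (2 ^ k) → Bool)
    (hc : ∀ a : ZMod (2 ^ k), c (a + ((2 ^ (k - 1) : ℕ) : ZMod (2 ^ k))) ≠ c a)
    (a : ZMod (2 ^ k)) {b : ZMod (2 ^ k)} (hb : b ≠ 0) :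
    #{x | c (a + x * b) = true} = #{x | c (a + x * b) = false} := by
  obtain ⟨t, ht⟩ :=
    ZMod.exists_mul_eq_natCast_of_gcd_dvd b (ZMod.gcd_val_dvd_prime_pow_pred Nat.prime_two hb)
  refine card_filter_eq_true_eq_card_filter_eq_false (fun x => c (a + x * b))
    (Equiv.addRight t) fun x => ?_
  have hshift : a + (x + t) * b = a + x * b + ((2 ^ (k - 1) : ℕ) : ZMod (2 ^ k)) := by
    rw [← ht]
    ring
  simpa only [Equiv.coe_addRight, hshift] using Bool.eq_not_iff.2 (hc (a + x * b))

theorem good_coloring_progression_balanced_general (k : ℕ)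
    (c : ZMod (2 ^ k) → Bool)
    (hc : ∀ a : ZMod (2 ^ k), c (a + ((2 ^ (k - 1) : ℕ) : ZMod (2 ^ k))) ≠ c a)
    (a b : ℤ) :
    ((2 ^ k : ℤ) ∣ b →
      ∀ i ∈ Finset.range (2 ^ k),
        c (((a + (i : ℤ) * b : ℤ) : ZMod (2 ^ k))) = c ((a : ZMod (2 ^ k)))) ∧
    (¬ (2 ^ k : ℤ) ∣ b →
      ((Finset.range (2 ^ k)).filter
          (fun (i : ℕ) => c (((a + (i : ℤ) * b : ℤ) : ZMod (2 ^ k))) = true)).card =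
      ((Finset.range (2 ^ k)).filter
          (fun (i : ℕ) => c (((a + (i : ℤ) * b : ℤ) : ZMod (2 ^ k))) = false)).card) ∧
    (2 ^ k : ℤ) ∣
      ((((Finset.range (2 ^ k)).filter
          (fun (i : ℕ) => c (((a + (i : ℤ) * b : ℤ) : ZMod (2 ^ k))) = true)).card : ℤ) -
       (((Finset.range (2 ^ k)).filter
          (fun (i : ℕ) => c (((a + (i : ℤ) * b : ℤ) : ZMod (2 ^ k))) = false)).card : ℤ)) := by
  have hb_zero : (b : ZMod (2 ^ k)) = 0 ↔ (2 ^ k : ℤ) ∣ b := by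
    simpa using ZMod.intCast_zmod_eq_zero_iff_dvd b (2 ^ k)
  simp only [Int.cast_add, Int.cast_mul, Int.cast_natCast]
  have hconst : (2 ^ k : ℤ) ∣ b → ∀ i : ℕ, c (a + (i : ZMod (2 ^ k)) * b) = c a := by
    intro hb i
    simp [hb_zero.2 hb]
  have hbalanced : ¬ (2 ^ k : ℤ) ∣ b →
      #{i ∈ range (2 ^ k) | c (a + ((i : ℕ) : ZMod (2 ^ k)) * b) = true} =
        #{i ∈ range (2 ^ k) | c (a + ((i : ℕ) : ZMod (2 ^ k)) * b) = false} := by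
    intro hb
    rw [ZMod.card_filter_range_natCast fun x : ZMod (2 ^ k) => c (a + x * b) = true,
      ZMod.card_filter_range_natCast fun x : ZMod (2 ^ k) => c (a + x * b) = false]
    exact card_filter_progression_eq_true_eq_false c hc a (mt hb_zero.1 hb)
  refine ⟨fun hb i _ => hconst hb i, hbalanced, ?_⟩
  by_cases hb : (2 ^ k : ℤ) ∣ b
  · simp only [hconst hb, filter_const]
    cases c a <;> simp
  · simp [hbalanced hb]

/-- For `n = 2^k` and a good coloring `c : ZMod n → Bool`
(black = `true`), along the progression `a, a+b, …, a+(n-1)b` (mod `n`):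
if `n ∣ b` all terms have the same color, otherwise the number of black terms
equals the number of white terms; in either case the difference is a multiple
of `n`. -/
theorem good_coloring_progression_balanced (k : ℕ) (hk : 1 ≤ k)
    (c : ZMod (2 ^ k) → Bool)
    (hc : ∀ a : ZMod (2 ^ k), c (a + ((2 ^ (k - 1) : ℕ) : ZMod (2 ^ k))) ≠ c a)
    (a b : ℤ) :
    ((2 ^ k : ℤ) ∣ b →
      ∀ i ∈ Finset.range (2 ^ k),
        c (((a + (i : ℤ) * b : ℤ) : ZMod (2 ^ k))) = c ((a : ZMod (2 ^ k)))) ∧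
    (¬ (2 ^ k : ℤ) ∣ b →
      ((Finset.range (2 ^ k)).filter
          (fun (i : ℕ) => c (((a + (i : ℤ) * b : ℤ) : ZMod (2 ^ k))) = true)).card =
      ((Finset.range (2 ^ k)).filter
          (fun (i : ℕ) => c (((a + (i : ℤ) * b : ℤ) : ZMod (2 ^ k))) = false)).card) ∧
    (2 ^ k : ℤ) ∣
      ((((Finset.range (2 ^ k)).filter
          (fun (i : ℕ) => c (((a + (i : ℤ) * b : ℤ) : ZMod (2 ^ k))) = true)).card : ℤ) -
       (((Finset.range (2 ^ k)).filter
          (fun (i : ℕ) => c (((a + (i : ℤ) * b : ℤ) : ZMod (2 ^ k))) = false)).card : ℤ)) :=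
  good_coloring_progression_balanced_general k c hc a b
end

section
/- Let k ≥ 1 and n = 2^k, and let c : Z_n → {black, white} be a good coloring. Let a, b be integers with b even, and consider the arithmetic progression a, a+b, ..., a+(n/2 - 1)b reduced modulo n. Then the number of black terms minus the number of white terms is a multiple of n/2; moreover it is congruent to n/2 modulo n if n divides b, and congruent to 0 modulo n otherwise. -/
/-!
Write `m = 2^(k-1)` and `χ(x) = ±1` according as `x` is black or white, so that the quantity in
question is `∑_{i<m} χ(c(a + ib))`. If `2^k ∣ b` every term is `a` and the sum is `±m`.
Otherwise `2^s ∥ b` with `1 ≤ s < k`, and `t = 2^(k-1-s)` satisfies `t b ≡ m (mod 2^k)`: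
shifting the index by `t` moves the term by the antipodal shift `m`, so the summand is
antiperiodic with antiperiod `t`, and the sum over `m = 2t · 2^(s-1)` terms vanishes.
-/

open Finset Function

theorem card_filter_eq_true_sub_card_filter_eq_false {ι : Type*} (s : Finset ι)
    (p : ι → Bool) :
    (#{i ∈ s | p i = true} : ℤ) - #{i ∈ s | p i = false} =
      ∑ i ∈ s, if p i then 1 else -1 := by
  simp [sum_ite, sub_eq_add_neg]

namespace Function.Antiperiodic

variable {M : Type*} [AddCommGroup M] {f : ℕ → M} {t : ℕ}

theorem sum_range_two_mul_add_eq_zero (hf : Antiperiodic f t) (x : ℕ) :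
    ∑ i ∈ range (2 * t), f (x + i) = 0 := by
  rw [two_mul, sum_range_add, ← sum_add_distrib]
  refine sum_eq_zero fun i _ => ?_
  rw [show x + (t + i) = x + i + t by omega, hf, add_neg_cancel]

theorem sum_range_two_mul_mul_eq_zero (hf : Antiperiodic f t) (w : ℕ) :
    ∑ i ∈ range (2 * t * w), f i = 0 := by
  induction w with
  | zero => simp
  | succ w ih => rw [Nat.mul_succ, sum_range_add, ih, hf.sum_range_two_mul_add_eq_zero, add_zero]

end Function.Antiperiodic

/-- Writing `b = 2^s u` with `u` odd, the half-period is `t = 2^(k-1-s)`, and `w = 2^(s-1)`. -/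
theorem exists_half_period_of_two_dvd {k : ℕ} {b : ℤ} (hb : 2 ∣ b)
    (hkb : ¬ (2 ^ k : ℤ) ∣ b) :
    ∃ t w : ℕ, 2 * t * w = 2 ^ (k - 1) ∧
      ((t * b : ℤ) : ZMod (2 ^ k)) = ((2 ^ (k - 1) : ℕ) : ZMod (2 ^ k)) := by
  have hb0 : b ≠ 0 := by rintro rfl; exact hkb (dvd_zero _)
  obtain ⟨u, hbu, hu⟩ :=
    (Int.finiteMultiplicity_iff (a := 2).2 ⟨by decide, hb0⟩).exists_eq_pow_mul_and_not_dvd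
  generalize multiplicity 2 b = s at hbu
  subst hbu
  have hs : 1 ≤ s := by
    by_contra! hs0
    obtain rfl : s = 0 := by omega
    exact hu (by simpa using hb)
  have hsk : s < k := by
    by_contra! hks
    exact hkb ((pow_dvd_pow 2 hks).mul_right u)
  obtain ⟨v, rfl⟩ : Odd u := Int.odd_iff.2 (by omega)
  refine ⟨2 ^ (k - 1 - s), 2 ^ (s - 1), ?_, ?_⟩
  · rw [mul_assoc, ← pow_add, ← pow_succ']
    congr 1
    omega
  · have hts : (2 : ℤ) ^ (k - 1 - s) * 2 ^ s = 2 ^ (k - 1) := by rw [← pow_add]; congr 1; omega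
    have hk : (2 : ℤ) ^ k = 2 * 2 ^ (k - 1) := by rw [← pow_succ']; congr 1; omega
    have key : ((2 ^ (k - 1 - s) * (2 ^ s * (2 * v + 1)) : ℤ) : ZMod (2 ^ k)) =
        (2 ^ (k - 1) : ℤ) :=
      (ZMod.intCast_eq_intCast_iff_dvd_sub _ _ _).2
        ⟨-v, by push_cast; linear_combination v * hk - (2 * v + 1) * hts⟩
    simpa using key

section Progression

variable {n : ℕ} (c : ZMod n → Bool) (a b : ℤ)

theorem antiperiodic_sign_progression {m t : ℕ} (hc : ∀ x, c (x + m) ≠ c x)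
    (ht : ((t * b : ℤ) : ZMod n) = m) :
    Antiperiodic (fun i : ℕ => if c ((a + i * b : ℤ) : ZMod n) then (1 : ℤ) else -1) t := by
  intro i
  have hshift : ((a + (i + t : ℕ) * b : ℤ) : ZMod n) = ((a + i * b : ℤ) : ZMod n) + m := by
    rw [← ht]
    push_cast
    ring
  dsimp only
  rw [hshift, Bool.eq_not_of_ne (hc _)]
  cases c ((a + i * b : ℤ) : ZMod n) <;> simp

theorem sum_sign_progression_of_dvd (hnb : (n : ℤ) ∣ b) (m : ℕ) :
    ∑ i ∈ range m, (if c ((a + i * b : ℤ) : ZMod n) then (1 : ℤ) else -1) =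
      m * if c (a : ZMod n) then 1 else -1 := by
  have hconst (i : ℕ) : ((a + i * b : ℤ) : ZMod n) = a := by
    rw [Int.cast_add, (ZMod.intCast_zmod_eq_zero_iff_dvd _ _).2 (hnb.mul_left _), add_zero]
  simp [hconst]

end Progression

theorem good_coloring_half_progression_general (k : ℕ)
    (c : ZMod (2 ^ k) → Bool)
    (hc : ∀ a : ZMod (2 ^ k), c (a + ((2 ^ (k - 1) : ℕ) : ZMod (2 ^ k))) ≠ c a)
    (a b : ℤ) (hb : 2 ∣ b) :
    (2 ^ (k - 1) : ℤ) ∣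
      ((((Finset.range (2 ^ (k - 1))).filter
          (fun (i : ℕ) => c (((a + (i : ℤ) * b : ℤ) : ZMod (2 ^ k))) = true)).card : ℤ) -
       (((Finset.range (2 ^ (k - 1))).filter
          (fun (i : ℕ) => c (((a + (i : ℤ) * b : ℤ) : ZMod (2 ^ k))) = false)).card : ℤ)) ∧
    ((2 ^ k : ℤ) ∣ b →
      (2 ^ k : ℤ) ∣
        (((((Finset.range (2 ^ (k - 1))).filter
            (fun (i : ℕ) => c (((a + (i : ℤ) * b : ℤ) : ZMod (2 ^ k))) = true)).card : ℤ) -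
         (((Finset.range (2 ^ (k - 1))).filter
            (fun (i : ℕ) => c (((a + (i : ℤ) * b : ℤ) : ZMod (2 ^ k))) = false)).card : ℤ)) -
          2 ^ (k - 1))) ∧
    (¬ (2 ^ k : ℤ) ∣ b →
      (2 ^ k : ℤ) ∣
        ((((Finset.range (2 ^ (k - 1))).filter
            (fun (i : ℕ) => c (((a + (i : ℤ) * b : ℤ) : ZMod (2 ^ k))) = true)).card : ℤ) -
         (((Finset.range (2 ^ (k - 1))).filter
            (fun (i : ℕ) => c (((a + (i : ℤ) * b : ℤ) : ZMod (2 ^ k))) = false)).card : ℤ))) := by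
  rw [card_filter_eq_true_sub_card_filter_eq_false]
  by_cases hkb : (2 ^ k : ℤ) ∣ b
  · rw [sum_sign_progression_of_dvd c a b (by exact_mod_cast hkb)]
    have h2m : (2 : ℤ) ^ k ∣ 2 * 2 ^ (k - 1) := by
      rw [← pow_succ']
      exact pow_dvd_pow 2 (by omega)
    refine ⟨by push_cast; split_ifs <;> simp, fun _ => ?_, absurd hkb⟩
    split_ifs
    · simp
    · have hneg : ((2 ^ (k - 1) : ℕ) : ℤ) * -1 - 2 ^ (k - 1) = -(2 * 2 ^ (k - 1)) := by
        push_cast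
        ring
      exact hneg ▸ h2m.neg_right
  · obtain ⟨t, w, hm, ht⟩ := exists_half_period_of_two_dvd hb hkb
    rw [← hm, (antiperiodic_sign_progression c a b hc ht).sum_range_two_mul_mul_eq_zero]
    simp [hkb]

/-- For `n = 2^k`, a good coloring `c : ZMod n → Bool` and `b` even,
along the progression `a, a+b, …, a+(n/2-1)b` (mod `n`), the number of black
terms minus the number of white terms is a multiple of `n/2`; it is `≡ n/2 mod n`
if `n ∣ b` and `≡ 0 mod n` otherwise. -/
theorem good_coloring_half_progression (k : ℕ) (hk : 1 ≤ k)
    (c : ZMod (2 ^ k) → Bool)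
    (hc : ∀ a : ZMod (2 ^ k), c (a + ((2 ^ (k - 1) : ℕ) : ZMod (2 ^ k))) ≠ c a)
    (a b : ℤ) (hb : 2 ∣ b) :
    (2 ^ (k - 1) : ℤ) ∣
      ((((Finset.range (2 ^ (k - 1))).filter
          (fun (i : ℕ) => c (((a + (i : ℤ) * b : ℤ) : ZMod (2 ^ k))) = true)).card : ℤ) -
       (((Finset.range (2 ^ (k - 1))).filter
          (fun (i : ℕ) => c (((a + (i : ℤ) * b : ℤ) : ZMod (2 ^ k))) = false)).card : ℤ)) ∧
    ((2 ^ k : ℤ) ∣ b →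
      (2 ^ k : ℤ) ∣
        (((((Finset.range (2 ^ (k - 1))).filter
            (fun (i : ℕ) => c (((a + (i : ℤ) * b : ℤ) : ZMod (2 ^ k))) = true)).card : ℤ) -
         (((Finset.range (2 ^ (k - 1))).filter
            (fun (i : ℕ) => c (((a + (i : ℤ) * b : ℤ) : ZMod (2 ^ k))) = false)).card : ℤ)) -
          2 ^ (k - 1))) ∧
    (¬ (2 ^ k : ℤ) ∣ b →
      (2 ^ k : ℤ) ∣
        ((((Finset.range (2 ^ (k - 1))).filter
            (fun (i : ℕ) => c (((a + (i : ℤ) * b : ℤ) : ZMod (2 ^ k))) = true)).card : ℤ) -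
         (((Finset.range (2 ^ (k - 1))).filter
            (fun (i : ℕ) => c (((a + (i : ℤ) * b : ℤ) : ZMod (2 ^ k))) = false)).card : ℤ))) :=
  good_coloring_half_progression_general k c hc a b hb
end

section
/- Let p be a prime, k ≥ 1, n = p^k, and let c : Z_n → Z_n be a p-good coloring. For any integers a, b, the sum c(a) + c(a+b) + c(a+2b) + ... + c(a+(n-1)b) equals 0 in Z_n (where the arguments are reduced modulo n). -/
/-!
Write the step as `p ^ j * u` with `p ∤ u`; the case `p ^ k ∣ b` is trivial, since then the sum
is `p ^ k • c a = 0` in `ZMod (p ^ k)`, so assume `j < k`. Cutting the `p ^ k` indices into blocks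
`s + p ^ (k - 1 - j) * t` with `t < p`, each block contributes `∑ t < p, c (A + t * u * p ^ (k - 1))`,
and multiplication by the unit `u` of `ZMod p` only permutes the terms of the `p`-good sum
`∑ t < p, c (A + t * p ^ (k - 1)) = 0`.
-/

open Finset Function

section

variable {M : Type*} [AddCommMonoid M]

theorem Finset.sum_range_mul_eq_sum_sum (f : ℕ → M) (m n : ℕ) :
    ∑ i ∈ range (m * n), f i = ∑ q ∈ range n, ∑ r ∈ range m, f (m * q + r) := by
  induction n with
  | zero => simp
  | succ n ih => rw [Nat.mul_succ, sum_range_add, ih, sum_range_succ]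

theorem Finset.sum_range_eq_zero_of_sum_progression_eq_zero {f : ℕ → M} {m n : ℕ}
    (h : ∀ s, ∑ t ∈ range n, f (s + m * t) = 0) (L : ℕ) :
    ∑ i ∈ range (m * n * L), f i = 0 := by
  rw [sum_range_mul_eq_sum_sum]
  refine sum_eq_zero fun q _ => ?_
  rw [sum_range_mul_eq_sum_sum, sum_comm]
  refine sum_eq_zero fun r _ => (sum_congr rfl fun t _ => ?_).trans (h (m * n * q + r))
  congr 1
  ring

theorem ZMod.sum_range_natCast {n : ℕ} [NeZero n] (f : ZMod n → M) :
    ∑ i ∈ range n, f i = ∑ x : ZMod n, f x :=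
  sum_nbij' (↑) ZMod.val (by simp) (by simp [ZMod.val_lt])
    (fun _ hi => ZMod.val_cast_of_lt (mem_range.1 hi)) (fun x _ => ZMod.natCast_zmod_val x)
    (fun _ _ => rfl)

theorem Function.Periodic.sum_range_mul_of_coprime {f : ℕ → M} {n u : ℕ} (hf : Periodic f n)
    (hu : u.Coprime n) : ∑ i ∈ range n, f (i * u) = ∑ i ∈ range n, f i := by
  rcases eq_or_ne n 0 with rfl | hn
  · simp
  have : NeZero n := ⟨hn⟩
  set F : ZMod n → M := fun x => f x.val
  have hF : ∀ i, f i = F i := fun i => by simp only [F, ZMod.val_natCast, hf.map_mod_nat]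
  calc ∑ i ∈ range n, f (i * u) = ∑ x : ZMod n, F (x * ZMod.unitOfCoprime u hu) := by
        simp only [hF, Nat.cast_mul, ZMod.coe_unitOfCoprime]
        exact ZMod.sum_range_natCast (F <| · * (u : ZMod n))
    _ = ∑ x : ZMod n, F x := Equiv.sum_comp (Units.mulRight (ZMod.unitOfCoprime u hu)) F
    _ = ∑ i ∈ range n, f i := by simp only [hF, ZMod.sum_range_natCast F]

end

/-- The `p`-good condition on `ZMod n` for `n = p ^ k`, where `n / p = p ^ (k - 1)`. -/
def IsGoodColoring (p k : ℕ) {M : Type*} [AddCommMonoid M] (c : ZMod (p ^ k) → M) : Prop :=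
  ∀ a : ZMod (p ^ k), ∑ i ∈ range p, c (a + ((i * p ^ (k - 1) : ℕ) : ZMod (p ^ k))) = 0

namespace IsGoodColoring

variable {M : Type*} [AddCommMonoid M] {p k : ℕ} {c : ZMod (p ^ k) → M}

theorem sum_progression_coprime_step_eq_zero (hc : IsGoodColoring p k c) (hk : 0 < k)
    (A : ZMod (p ^ k)) {u : ℕ} (hu : u.Coprime p) :
    ∑ t ∈ range p, c (A + ((t * u * p ^ (k - 1) : ℕ) : ZMod (p ^ k))) = 0 := by
  have hper : Periodic (fun t : ℕ => c (A + ((t * p ^ (k - 1) : ℕ) : ZMod (p ^ k)))) p :=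
    fun t => by
      have : (t + p) * p ^ (k - 1) = t * p ^ (k - 1) + p ^ k := by
        rw [add_mul, ← pow_succ', Nat.sub_add_cancel hk]
      simp only [this, Nat.cast_add, ZMod.natCast_self, add_zero]
  exact (hper.sum_range_mul_of_coprime hu).trans (hc A)

theorem sum_progression_eq_zero (hc : IsGoodColoring p k c) (hp : p.Prime) (A : ZMod (p ^ k))
    {β : ℕ} (hβ : ¬p ^ k ∣ β) :
    ∑ i ∈ range (p ^ k), c (A + ((i * β : ℕ) : ZMod (p ^ k))) = 0 := by
  obtain ⟨j, u, hu, rfl⟩ :=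
    Nat.exists_eq_pow_mul_and_not_dvd (n := β) (by rintro rfl; exact hβ (dvd_zero _)) p hp.ne_one
  have hj : j < k := by
    by_contra! h
    exact hβ ((pow_dvd_pow p h).mul_right u)
  have hpow : p ^ (k - 1 - j) * p ^ j = p ^ (k - 1) := by
    rw [← pow_add, Nat.sub_add_cancel (by omega)]
  have hsplit : p ^ (k - 1 - j) * p * p ^ j = p ^ k := by
    rw [mul_right_comm, hpow, ← pow_succ, Nat.sub_add_cancel (by omega)]
  nth_rw 1 [← hsplit]
  refine sum_range_eq_zero_of_sum_progression_eq_zero (fun s => ?_) _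
  refine (sum_congr rfl fun t _ => ?_).trans (hc.sum_progression_coprime_step_eq_zero (by omega)
    (A + ((s * (p ^ j * u) : ℕ) : ZMod (p ^ k))) (hp.coprime_iff_not_dvd.2 hu).symm)
  have : (s + p ^ (k - 1 - j) * t) * (p ^ j * u) = s * (p ^ j * u) + t * u * p ^ (k - 1) := by
    rw [← hpow]
    ring
  rw [this, Nat.cast_add, add_assoc]

end IsGoodColoring

theorem p_good_coloring_full_progression_general (p : ℕ) (hp : p.Prime) (k : ℕ)
    (c : ZMod (p ^ k) → ZMod (p ^ k))
    (hc : ∀ a : ZMod (p ^ k),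
      ∑ i ∈ Finset.range p, c (a + ((i * p ^ (k - 1) : ℕ) : ZMod (p ^ k))) = 0)
    (a b : ℤ) :
    ∑ i ∈ Finset.range (p ^ k), c (((a + (i : ℤ) * b : ℤ) : ZMod (p ^ k))) = 0 := by
  have : NeZero (p ^ k) := ⟨pow_ne_zero k hp.ne_zero⟩
  set β := (b : ZMod (p ^ k)).val
  have hterm : ∀ i : ℕ, ((a + i * b : ℤ) : ZMod (p ^ k)) = a + ((i * β : ℕ) : ZMod (p ^ k)) :=
    fun i => by push_cast; rw [ZMod.natCast_zmod_val]
  simp only [hterm]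
  rcases eq_or_ne β 0 with hβ0 | hβ0
  · simp [hβ0]
  · exact IsGoodColoring.sum_progression_eq_zero hc hp _
      (Nat.not_dvd_of_pos_of_lt (Nat.pos_of_ne_zero hβ0) (ZMod.val_lt _))

/-- For a prime `p`, `n = p^k` and a `p`-good coloring
`c : ZMod n → ZMod n`, the sum of `c` along any arithmetic progression
`a, a+b, …, a+(n-1)b` (mod `n`) is `0` in `ZMod n`. -/
theorem p_good_coloring_full_progression (p : ℕ) (hp : p.Prime) (k : ℕ) (hk : 1 ≤ k)
    (c : ZMod (p ^ k) → ZMod (p ^ k))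
    (hc : ∀ a : ZMod (p ^ k),
      ∑ i ∈ Finset.range p, c (a + ((i * p ^ (k - 1) : ℕ) : ZMod (p ^ k))) = 0)
    (a b : ℤ) :
    ∑ i ∈ Finset.range (p ^ k), c (((a + (i : ℤ) * b : ℤ) : ZMod (p ^ k))) = 0 :=
  p_good_coloring_full_progression_general p hp k c hc a b
end

section
/- For every integer k ≥ 2, the central binomial coefficient C(2^k, 2^(k-1)) is congruent to 6 modulo 8. In particular, C(2^k, 2^(k-1)) − 2 is not a multiple of 8. -/
/-!
With `N = 2 ^ (n + 1)`, Vandermonde gives `C(2N, N) = ∑ i, C(N, i) ^ 2`. By Kummer,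
`v₂ C(N, i) = n + 1 - v₂ i`, so `4 ∣ C(N, i)` unless `i ∈ {0, N / 2, N}`, and modulo 8 only
those three terms survive: `C(2N, N) ≡ 2 + C(N, N / 2) ^ 2`. Starting from `C(4, 2) = 6`,
this recursion stays at `6`, since `2 + 6 ^ 2 = 38 ≡ 6 (mod 8)`.
-/

open Finset

theorem sq_dvd_choose_prime_pow_succ {p n i : ℕ} (hp : p.Prime) (hi0 : i ≠ 0)
    (hi : i ≤ p ^ (n + 1)) (hpi : ¬ p ^ n ∣ i) : p ^ 2 ∣ (p ^ (n + 1)).choose i := by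
  have hv : i.factorization p < n := by
    by_contra! h
    exact hpi ((pow_dvd_pow p h).trans (Nat.ordProj_dvd i p))
  calc p ^ 2 ∣ p ^ (n + 1 - i.factorization p) := pow_dvd_pow p (by omega)
    _ = p ^ ((p ^ (n + 1)).choose i).factorization p := by
      rw [Nat.factorization_choose_prime_pow hp hi hi0]
    _ ∣ _ := Nat.ordProj_dvd _ p

theorem four_dvd_choose_two_pow_succ {n i : ℕ} (hi0 : i ≠ 0) (hi : i < 2 ^ (n + 1))
    (hin : i ≠ 2 ^ n) : 4 ∣ (2 ^ (n + 1)).choose i := by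
  refine sq_dvd_choose_prime_pow_succ Nat.prime_two hi0 hi.le ?_
  rintro ⟨c, rfl⟩
  have hc : c < 2 := by
    rw [pow_succ] at hi
    exact Nat.lt_of_mul_lt_mul_left hi
  interval_cases c <;> simp_all

theorem natCast_choose_two_pow_succ_sq_eq_zero {n i : ℕ} (hi0 : i ≠ 0) (hi : i < 2 ^ (n + 1))
    (hin : i ≠ 2 ^ n) : (((2 ^ (n + 1)).choose i : ZMod 8)) ^ 2 = 0 := by
  obtain ⟨m, hm⟩ := four_dvd_choose_two_pow_succ hi0 hi hin
  rw [hm, Nat.cast_mul, mul_pow]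
  exact mul_eq_zero_of_left (by decide) _

theorem natCast_choose_two_pow_add_two_eq_two_add_sq (n : ℕ) :
    ((2 ^ (n + 2)).choose (2 ^ (n + 1)) : ZMod 8) =
      2 + ((2 ^ (n + 1)).choose (2 ^ n)) ^ 2 := by
  have hlt : 2 ^ n < 2 ^ (n + 1) := Nat.pow_lt_pow_right one_lt_two n.lt_succ_self
  have hsub : ({0, 2 ^ n, 2 ^ (n + 1)} : Finset ℕ) ⊆ range (2 ^ (n + 1) + 1) := by
    intro i hi
    simp only [mem_insert, mem_singleton] at hi
    rw [mem_range]
    omega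
  rw [pow_succ' 2 (n + 1), ← Nat.sum_range_choose_sq, Nat.cast_sum, ← sum_subset hsub]
  · rw [sum_insert (by simp [(Nat.two_pow_pos n).ne, (Nat.two_pow_pos (n + 1)).ne]),
      sum_insert (by simp [hlt.ne]), sum_singleton]
    push_cast [Nat.choose_zero_right, Nat.choose_self]
    ring
  · intro i hi hi'
    simp only [mem_insert, mem_singleton, not_or, mem_range] at hi hi'
    exact_mod_cast natCast_choose_two_pow_succ_sq_eq_zero hi'.1 (by omega) hi'.2.1

theorem natCast_choose_two_pow_add_two_eq_six (n : ℕ) :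
    ((2 ^ (n + 2)).choose (2 ^ (n + 1)) : ZMod 8) = 6 := by
  induction n with
  | zero => decide
  | succ n ih =>
    rw [natCast_choose_two_pow_add_two_eq_two_add_sq, ih]
    decide

/-- For `k ≥ 2`, the central binomial coefficient `C(2^k, 2^(k-1))`
is congruent to `6` modulo `8`; in particular `C(2^k, 2^(k-1)) - 2` is not a
multiple of `8`. -/
theorem central_binom_mod_eight (k : ℕ) (hk : 2 ≤ k) :
    Nat.choose (2 ^ k) (2 ^ (k - 1)) % 8 = 6 ∧
    ¬ (8 : ℤ) ∣ ((Nat.choose (2 ^ k) (2 ^ (k - 1)) : ℤ) - 2) := by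
  obtain ⟨n, rfl⟩ := Nat.exists_eq_add_of_le' hk
  have hmod : Nat.choose (2 ^ (n + 2)) (2 ^ (n + 2 - 1)) % 8 = 6 := by
    show (2 ^ (n + 2)).choose (2 ^ (n + 1)) % 8 = 6
    rw [← ZMod.val_natCast, natCast_choose_two_pow_add_two_eq_six]
    rfl
  exact ⟨hmod, by omega⟩
end

section
/- Let n = 2^k with k ≥ 3, and let r be an integer with 0 ≤ r ≤ n and r not equal to 0, n/2, or n. Then 4 divides the binomial coefficient C(n, r). -/
/-!
Writing `n = 2 ^ k`, the identity `r * C(n, r) = n * C(n - 1, r - 1)` shows `2 ^ k ∣ r * C(n, r)`.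
The only `r` with `0 < r ≤ 2 ^ k` divisible by `2 ^ (k - 1)` are `2 ^ (k - 1)` and `2 ^ k`, so for
every other `r` the `2`-part of `r` is at most `2 ^ (k - 2)`, leaving a factor `4` for `C(n, r)`.
-/

theorem Nat.dvd_mul_choose (n r : ℕ) : n ∣ r * n.choose r := by
  rcases r with _ | r
  · simp
  rcases n with _ | n
  · simp
  exact ⟨n.choose r, by rw [mul_comm, ← Nat.add_one_mul_choose_eq]⟩

theorem Nat.Prime.pow_succ_dvd_of_pow_add_dvd_mul {p a b m k : ℕ} (hp : p.Prime)
    (hab : p ^ (m + k) ∣ a * b) (ha : ¬ p ^ m ∣ a) : p ^ (k + 1) ∣ b := by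
  have : Fact p.Prime := ⟨hp⟩
  have ha0 : a ≠ 0 := by rintro rfl; exact ha (dvd_zero _)
  rcases eq_or_ne b 0 with rfl | hb0
  · exact dvd_zero _
  rw [padicValNat_dvd_iff_le ha0, not_le] at ha
  rw [padicValNat_dvd_iff_le (mul_ne_zero ha0 hb0), padicValNat.mul ha0 hb0] at hab
  rw [padicValNat_dvd_iff_le hb0]
  omega

theorem Nat.eq_or_eq_two_mul_of_dvd_of_le_two_mul {m r : ℕ} (h0 : r ≠ 0) (hle : r ≤ 2 * m)
    (hdvd : m ∣ r) : r = m ∨ r = 2 * m := by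
  obtain ⟨t, rfl⟩ := hdvd
  have hm : 0 < m := Nat.pos_of_ne_zero (left_ne_zero_of_mul h0)
  have ht : t ≤ 2 := by nlinarith
  interval_cases t <;> simp_all [mul_comm]

theorem four_dvd_choose_general (k : ℕ) (r : ℕ) (hr : r ≤ 2 ^ k)
    (h0 : r ≠ 0) (hmid : r ≠ 2 ^ (k - 1)) (htop : r ≠ 2 ^ k) :
    4 ∣ Nat.choose (2 ^ k) r := by
  rcases k with _ | j
  · -- `2 ^ (0 - 1) = 1`, so no `r` qualifies
    simp at hr hmid
    omega
  rw [Nat.add_sub_cancel] at hmid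
  have hr_not_dvd : ¬ 2 ^ j ∣ r := fun hdvd =>
    (Nat.eq_or_eq_two_mul_of_dvd_of_le_two_mul h0 (pow_succ' 2 j ▸ hr) hdvd).elim hmid
      (pow_succ' 2 j ▸ htop)
  exact Nat.prime_two.pow_succ_dvd_of_pow_add_dvd_mul (Nat.dvd_mul_choose _ r) hr_not_dvd

/-- For `n = 2^k` with `k ≥ 3` and `0 ≤ r ≤ n` with `r ∉ {0, n/2, n}`,
`4` divides `C(n, r)`. -/
theorem four_dvd_choose (k : ℕ) (hk : 3 ≤ k) (r : ℕ) (hr : r ≤ 2 ^ k)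
    (h0 : r ≠ 0) (hmid : r ≠ 2 ^ (k - 1)) (htop : r ≠ 2 ^ k) :
    4 ∣ Nat.choose (2 ^ k) r :=
  four_dvd_choose_general k r hr h0 hmid htop
end

section
/- Let F₂ be the free group on x, y, let n ≥ 1, and let z ∈ F₂' (the commutator subgroup) be a product of two n-th powers, z = aⁿbⁿ with a, b ∈ F₂. Then the winding invariant P_z ∈ Z[X^{±1}, Y^{±1}] is divisible by 1 + m + m² + ... + m^{n-1} for some monomial m = X^i Y^j (with i, j ∈ Z). -/
/-- The free group on two generators `x = of true`, `y = of false`. -/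
abbrev F2 := FreeGroup Bool
/-- The generator `x`. -/
def xx : F2 := FreeGroup.of true
/-- The generator `y`. -/
def yy : F2 := FreeGroup.of false
/-- The ring of Laurent polynomials `ℤ[X^{±1}, Y^{±1}]`. -/
abbrev L := AddMonoidAlgebra ℤ (ℤ × ℤ)
/-- The monomial `X^i Y^j`. -/
noncomputable def mono (i j : ℤ) : L := AddMonoidAlgebra.single (i, j) 1
/-- Total exponent of `x` in a word of `F2`. -/
def expx (u : F2) : ℤ :=
  Multiplicative.toAdd (FreeGroup.lift (fun b => Multiplicative.ofAdd (if b then (1 : ℤ) else 0)) u)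
/-- Total exponent of `y` in a word of `F2`. -/
def expy (u : F2) : ℤ :=
  Multiplicative.toAdd (FreeGroup.lift (fun b => Multiplicative.ofAdd (if b then (0 : ℤ) else 1)) u)

/-!
Since `a^(k+1) b^(k+1) = a (a^k b^k) a⁻¹ · (a b)`, additivity and the conjugation rule give
`W(a^n b^n) = (1 + m + ⋯ + m^(n-1)) W(a b)` with `m = X^(exp_x a) Y^(exp_y a)`, as soon as
`a b ∈ F₂'`. That holds because `a^n b^n` and `(a b)^n` agree in the abelianization `ℤ²`,
which is torsion-free.
-/

open Finset

theorem pow_succ_mul_pow_succ_eq_conj_mul {G : Type*} [Group G] (a b : G) (k : ℕ) :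
    a ^ (k + 1) * b ^ (k + 1) = a * (a ^ k * b ^ k) * a⁻¹ * (a * b) := by
  group

namespace Abelianization

variable {G : Type*} [Group G]

theorem pow_mul_pow_mem_commutator_iff (a b : G) (n : ℕ) :
    a ^ n * b ^ n ∈ commutator G ↔ (a * b) ^ n ∈ commutator G := by
  simp only [← ker_of, MonoidHom.mem_ker, map_mul, map_pow, mul_pow]

theorem mem_commutator_of_pow_mem [IsMulTorsionFree (Abelianization G)] {g : G} {n : ℕ}
    (hn : n ≠ 0) (h : g ^ n ∈ commutator G) : g ∈ commutator G := by
  rw [← ker_of, MonoidHom.mem_ker] at h ⊢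
  rwa [map_pow, pow_eq_one_iff_left hn] at h

theorem mul_mem_commutator_of_pow_mul_pow_mem [IsMulTorsionFree (Abelianization G)] {a b : G}
    {n : ℕ} (hn : n ≠ 0) (h : a ^ n * b ^ n ∈ commutator G) : a * b ∈ commutator G :=
  mem_commutator_of_pow_mem hn ((pow_mul_pow_mem_commutator_iff a b n).mp h)

end Abelianization

instance FreeGroup.isMulTorsionFree_abelianization (α : Type*) :
    IsMulTorsionFree (Abelianization (FreeGroup α)) :=
  Function.Injective.isMulTorsionFree
    (AddMonoidHom.toMultiplicativeRight (FreeAbelianGroup.equivFinsupp (X := α)).toAddMonoidHom)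
    (FreeAbelianGroup.equivFinsupp (X := α)).injective

section ConjugationCocycle

variable {G R : Type*} [Group G] [CommRing R] {N : Subgroup G} [N.Normal]

theorem Subgroup.pow_mul_pow_mem_of_mul_mem {a b : G} (hab : a * b ∈ N) (k : ℕ) :
    a ^ k * b ^ k ∈ N := by
  induction k with
  | zero => simp
  | succ k ih =>
    rw [pow_succ_mul_pow_succ_eq_conj_mul]
    exact N.mul_mem (Subgroup.Normal.conj_mem inferInstance _ ih a) hab

theorem apply_pow_mul_pow_eq_geom_sum_mul (W : N → R) (χ : G → R)
    (hadd : ∀ z w : N, W (z * w) = W z + W w)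
    (hconj : ∀ (u : G) (z : N) (h : u * ↑z * u⁻¹ ∈ N), W ⟨u * ↑z * u⁻¹, h⟩ = χ u * W z)
    {a b : G} (hab : a * b ∈ N) (k : ℕ) :
    W ⟨a ^ k * b ^ k, N.pow_mul_pow_mem_of_mul_mem hab k⟩ =
      (∑ t ∈ range k, χ a ^ t) * W ⟨a * b, hab⟩ := by
  induction k with
  | zero =>
    have hW1 : W 1 = 0 := by simpa using hadd 1 1
    rw [range_zero, sum_empty, zero_mul, ← hW1]
    exact congrArg W (Subtype.ext (by simp))
  | succ k ih =>
    have hconj_mem : a * (a ^ k * b ^ k) * a⁻¹ ∈ N :=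
      Subgroup.Normal.conj_mem inferInstance _ (N.pow_mul_pow_mem_of_mul_mem hab k) a
    have hsplit : (⟨a ^ (k + 1) * b ^ (k + 1), N.pow_mul_pow_mem_of_mul_mem hab (k + 1)⟩ : N) =
        ⟨a * (a ^ k * b ^ k) * a⁻¹, hconj_mem⟩ * ⟨a * b, hab⟩ :=
      Subtype.ext (pow_succ_mul_pow_succ_eq_conj_mul a b k)
    rw [hsplit, hadd, hconj a ⟨_, N.pow_mul_pow_mem_of_mul_mem hab k⟩ hconj_mem, ih, geom_sum_succ]
    ring

end ConjugationCocycle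

open scoped commutatorElement

theorem winding_of_product_of_two_nth_powers_general
    (W : commutator F2 → L)
    (hadd : ∀ z w : commutator F2, W (z * w) = W z + W w)
    (hconj : ∀ (u : F2) (z : commutator F2) (h : u * ↑z * u⁻¹ ∈ commutator F2),
      W ⟨u * ↑z * u⁻¹, h⟩ = mono (expx u) (expy u) * W z)
    (n : ℕ) (z : commutator F2) (a b : F2)
    (hz : (z : F2) = a ^ n * b ^ n) :
    ∃ i j : ℤ, (∑ t ∈ Finset.range n, (mono i j) ^ t) ∣ W z := by
  rcases eq_or_ne n 0 with rfl | hn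
  · refine ⟨0, 0, ?_⟩
    have hz1 : z = 1 := Subtype.ext (by simpa using hz)
    have hW1 : W 1 = 0 := by simpa using hadd 1 1
    simp [hz1, hW1]
  · have hab : a * b ∈ commutator F2 :=
      Abelianization.mul_mem_commutator_of_pow_mul_pow_mem hn (hz ▸ z.2)
    have hz' : z = ⟨a ^ n * b ^ n, Subgroup.pow_mul_pow_mem_of_mul_mem hab n⟩ := Subtype.ext hz
    refine ⟨expx a, expy a, ?_⟩
    rw [hz', apply_pow_mul_pow_eq_geom_sum_mul W (fun u => mono (expx u) (expy u)) hadd hconj hab n]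
    exact dvd_mul_right _ _

/-- If `z ∈ F₂'` is a product of two `n`-th powers, then its winding
invariant `W z` is divisible by `1 + m + m² + … + m^{n-1}` for some monomial
`m = X^i Y^j`. Here `W` is the winding invariant, characterized as the
homomorphism with `W([x,y]) = 1` and the conjugation formula. -/
theorem winding_of_product_of_two_nth_powers
    (W : commutator F2 → L)
    (hadd : ∀ z w : commutator F2, W (z * w) = W z + W w)
    (hcomm : ∀ h : ⁅xx, yy⁆ ∈ commutator F2, W ⟨⁅xx, yy⁆, h⟩ = 1)
    (hconj : ∀ (u : F2) (z : commutator F2) (h : u * ↑z * u⁻¹ ∈ commutator F2),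
      W ⟨u * ↑z * u⁻¹, h⟩ = mono (expx u) (expy u) * W z)
    (n : ℕ) (hn : 1 ≤ n) (z : commutator F2) (a b : F2)
    (hz : (z : F2) = a ^ n * b ^ n) :
    ∃ i j : ℤ, (∑ t ∈ Finset.range n, (mono i j) ^ t) ∣ W z :=
  winding_of_product_of_two_nth_powers_general W hadd hconj n z a b hz
end

section
/- For every m ≥ 1, the winding invariant of the m-th Engel word e_m satisfies W(e_m) = −(Y − 1)^{m−1} in Z[X^{±1}, Y^{±1}]. -/
open scoped commutatorElement

/-- The Engel words: `engel 0 = e₁ = [y,x]` and `engel m = e_{m+1} = [y, e_m]`. -/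
def engel : ℕ → F2
  | 0 => ⁅yy, xx⁆
  | m + 1 => ⁅yy, engel m⁆

/-
Since `⁅u, z⁆ = (u z u⁻¹) z⁻¹`, additivity and the conjugation rule give
`W ⁅u, z⁆ = (mono (expx u) (expy u) - 1) W z`. For `u = y` the factor is `Y - 1`, so each new
bracket with `y` multiplies `W` by `Y - 1`, starting from `W ⁅y, x⁆ = -W ⁅x, y⁆ = -1`.
-/

theorem commutatorElement_mem_commutator {G : Type*} [Group G] (a b : G) :
    ⁅a, b⁆ ∈ commutator G := by
  rw [commutator_def]
  exact Subgroup.commutator_mem_commutator (Subgroup.mem_top a) (Subgroup.mem_top b)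

theorem map_inv_of_map_mul_eq_add {G A : Type*} [Group G] [AddGroup A] {f : G → A}
    (hf : ∀ a b, f (a * b) = f a + f b) (a : G) : f a⁻¹ = -f a :=
  congrArg Multiplicative.toAdd (map_inv (MonoidHom.mk' (fun g => Multiplicative.ofAdd (f g)) hf) a)

@[simp]
theorem expx_yy : expx yy = 0 := by simp [expx, yy]

@[simp]
theorem expy_yy : expy yy = 1 := by simp [expy, yy]

theorem engel_mem_commutator (m : ℕ) : engel m ∈ commutator F2 := by
  cases m <;> exact commutatorElement_mem_commutator _ _

section Winding

variable {W : commutator F2 → L}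

theorem winding_commutatorElement (hadd : ∀ z w : commutator F2, W (z * w) = W z + W w)
    (hconj : ∀ (u : F2) (z : commutator F2) (h : u * ↑z * u⁻¹ ∈ commutator F2),
      W ⟨u * ↑z * u⁻¹, h⟩ = mono (expx u) (expy u) * W z)
    (u : F2) (z : commutator F2) (h : ⁅u, (z : F2)⁆ ∈ commutator F2) :
    W ⟨⁅u, (z : F2)⁆, h⟩ = (mono (expx u) (expy u) - 1) * W z := by
  have hconj_mem : u * ↑z * u⁻¹ ∈ commutator F2 :=
    (commutator F2).normal_of_characteristic.conj_mem _ z.2 u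
  have hsplit : (⟨⁅u, (z : F2)⁆, h⟩ : commutator F2) = ⟨u * ↑z * u⁻¹, hconj_mem⟩ * z⁻¹ :=
    Subtype.ext (commutatorElement_def u z)
  rw [hsplit, hadd, hconj, map_inv_of_map_mul_eq_add hadd]
  ring

theorem winding_engel_zero (hadd : ∀ z w : commutator F2, W (z * w) = W z + W w)
    (hcomm : ∀ h : ⁅xx, yy⁆ ∈ commutator F2, W ⟨⁅xx, yy⁆, h⟩ = 1) :
    W ⟨engel 0, engel_mem_commutator 0⟩ = -1 := by
  have hinv : (⟨engel 0, engel_mem_commutator 0⟩ : commutator F2) =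
      (⟨⁅xx, yy⁆, commutatorElement_mem_commutator xx yy⟩ : commutator F2)⁻¹ :=
    Subtype.ext (commutatorElement_inv xx yy).symm
  rw [hinv, map_inv_of_map_mul_eq_add hadd, hcomm]

end Winding

/-- For every `m ≥ 1`, `W(e_m) = -(Y-1)^{m-1}` (here `engel m`
denotes `e_{m+1}`, so the claim reads `W(engel m) = -(Y-1)^m`). -/
theorem winding_of_engel_words
    (W : commutator F2 → L)
    (hadd : ∀ z w : commutator F2, W (z * w) = W z + W w)
    (hcomm : ∀ h : ⁅xx, yy⁆ ∈ commutator F2, W ⟨⁅xx, yy⁆, h⟩ = 1)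
    (hconj : ∀ (u : F2) (z : commutator F2) (h : u * ↑z * u⁻¹ ∈ commutator F2),
      W ⟨u * ↑z * u⁻¹, h⟩ = mono (expx u) (expy u) * W z) :
    ∀ m : ℕ, ∃ h : engel m ∈ commutator F2,
      W ⟨engel m, h⟩ = -((mono 0 1) - 1) ^ m := by
  intro m
  refine ⟨engel_mem_commutator m, ?_⟩
  induction m with
  | zero => simpa using winding_engel_zero hadd hcomm
  | succ m ih =>
    calc W ⟨engel (m + 1), _⟩
        = (mono 0 1 - 1) * W ⟨engel m, engel_mem_commutator m⟩ := by
          rw [← expx_yy, ← expy_yy]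
          exact winding_commutatorElement hadd hconj yy ⟨engel m, engel_mem_commutator m⟩ _
      _ = -(mono 0 1 - 1) ^ (m + 1) := by rw [ih]; ring
end

section
/- Let n be a positive integer divisible by 4, write n = 2^k q with q odd and k ≥ 2, and let h : F₂' → Z_{2^k} be a horizontal invariant associated to a good coloring of Z_{2^k}. Then h([x,y]^{n/2}) = 2^{k−1} ≠ 0 in Z_{2^k}. -/
open scoped commutatorElement

theorem map_pow_eq_nsmul_of_map_mul {M A : Type*} [Monoid M] [AddGroup A] (f : M → A)
    (hf : ∀ a b, f (a * b) = f a + f b) (g : M) (m : ℕ) : f (g ^ m) = m • f g :=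
  map_pow (MonoidHom.mk' (fun a => Multiplicative.ofAdd (f a)) hf) g m

theorem AddMonoidAlgebra.sum_coeff_smul_one {R M N : Type*} [Semiring R] [Zero M]
    [AddCommMonoid N] (r : R) {g : M → R → N} (hg : g 0 0 = 0) :
    (r • (1 : AddMonoidAlgebra R M)).coeff.sum g = g 0 r := by
  rw [one_def, smul_single', mul_one, coeff_single, Finsupp.sum_single_index hg]

namespace ZMod

variable {N m : ℕ}

theorem natCast_mul_odd_of_eq_two_mul (hN : N = 2 * m) {q : ℕ} (hq : Odd q) :
    ((m * q : ℕ) : ZMod N) = m := by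
  obtain ⟨t, rfl⟩ := hq
  have hsplit : m * (2 * t + 1) = N * t + m := by rw [hN]; ring
  rw [hsplit, Nat.cast_add, Nat.cast_mul, natCast_self, zero_mul, zero_add]

theorem neg_natCast_of_eq_two_mul (hN : N = 2 * m) : -(m : ZMod N) = m := by
  rw [neg_eq_iff_add_eq_zero, ← Nat.cast_add, ← two_mul, ← hN, natCast_self]

theorem natCast_ne_zero_of_eq_two_mul (hN : N = 2 * m) (hm : 0 < m) : (m : ZMod N) ≠ 0 := by
  rw [Ne, natCast_eq_zero_iff]
  intro hdvd
  have := Nat.le_of_dvd hm hdvd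
  omega

end ZMod

theorem horizontal_invariant_of_commutator_power_general
    (W : commutator F2 → L)
    (hadd : ∀ z w : commutator F2, W (z * w) = W z + W w)
    (hcomm : ∀ h : ⁅xx, yy⁆ ∈ commutator F2, W ⟨⁅xx, yy⁆, h⟩ = 1)
    (n k q : ℕ) (hk : 2 ≤ k) (hq : Odd q) (hn : n = 2 ^ k * q)
    (c : ZMod (2 ^ k) → Bool)
    (hinv : commutator F2 → ZMod (2 ^ k))
    (hhinv : ∀ z : commutator F2,
      hinv z = Finsupp.sum (W z).coeff fun p a =>
        if c ((p.2 : ZMod (2 ^ k))) then (a : ZMod (2 ^ k)) else -(a : ZMod (2 ^ k))) :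
    ∀ hm : ⁅xx, yy⁆ ∈ commutator F2,
      hinv ((⟨⁅xx, yy⁆, hm⟩ : commutator F2) ^ (n / 2)) =
        ((2 ^ (k - 1) : ℕ) : ZMod (2 ^ k)) ∧
      ((2 ^ (k - 1) : ℕ) : ZMod (2 ^ k)) ≠ 0 := by
  intro hm
  have h2k : 2 ^ k = 2 * 2 ^ (k - 1) := by
    rw [mul_comm, Nat.two_pow_pred_mul_two (by omega)]
  have hhalf : n / 2 = 2 ^ (k - 1) * q := by
    rw [hn, h2k, mul_assoc, Nat.mul_div_cancel_left _ two_pos]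
  have hW : W (⟨⁅xx, yy⁆, hm⟩ ^ (n / 2)) = ((n / 2 : ℕ) : ℤ) • (1 : L) := by
    rw [map_pow_eq_nsmul_of_map_mul W hadd, hcomm, natCast_zsmul]
  refine ⟨?_, ZMod.natCast_ne_zero_of_eq_two_mul h2k (by positivity)⟩
  rw [hhinv, hW, AddMonoidAlgebra.sum_coeff_smul_one _ (by simp), Int.cast_natCast, hhalf,
    ZMod.natCast_mul_odd_of_eq_two_mul h2k hq, ZMod.neg_natCast_of_eq_two_mul h2k, ite_self]

/-- Let `4 ∣ n`, `n = 2^k q` with `q` odd and `k ≥ 2`, and let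
`h` be the horizontal invariant associated to a good coloring `c` of `Z_{2^k}`
(black = `true`): `h(z) = Σ_{(i,j)} ε(j)·W(z){(i,j)} mod 2^k` with `ε(j) = +1`
iff `c(j mod 2^k)` is black.  Then `h([x,y]^{n/2}) = 2^{k-1} ≠ 0` in `Z_{2^k}`. -/
theorem horizontal_invariant_of_commutator_power
    (W : commutator F2 → L)
    (hadd : ∀ z w : commutator F2, W (z * w) = W z + W w)
    (hcomm : ∀ h : ⁅xx, yy⁆ ∈ commutator F2, W ⟨⁅xx, yy⁆, h⟩ = 1)
    (hconj : ∀ (u : F2) (z : commutator F2) (h : u * ↑z * u⁻¹ ∈ commutator F2),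
      W ⟨u * ↑z * u⁻¹, h⟩ = mono (expx u) (expy u) * W z)
    (n k q : ℕ) (hk : 2 ≤ k) (hq : Odd q) (hn : n = 2 ^ k * q)
    (c : ZMod (2 ^ k) → Bool)
    (hc : ∀ a : ZMod (2 ^ k), c (a + ((2 ^ (k - 1) : ℕ) : ZMod (2 ^ k))) ≠ c a)
    (hinv : commutator F2 → ZMod (2 ^ k))
    (hhinv : ∀ z : commutator F2,
      hinv z = Finsupp.sum (W z).coeff fun p a =>
        if c ((p.2 : ZMod (2 ^ k))) then (a : ZMod (2 ^ k)) else -(a : ZMod (2 ^ k))) :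
    ∀ hm : ⁅xx, yy⁆ ∈ commutator F2,
      hinv ((⟨⁅xx, yy⁆, hm⟩ : commutator F2) ^ (n / 2)) =
        ((2 ^ (k - 1) : ℕ) : ZMod (2 ^ k)) ∧
      ((2 ^ (k - 1) : ℕ) : ZMod (2 ^ k)) ≠ 0 :=
  horizontal_invariant_of_commutator_power_general W hadd hcomm n k q hk hq hn c hinv hhinv
end

section
/- Let n = 2^k with k ≥ 3, and let h⁰ : Z[X^{±1}, Y^{±1}] → Z_n be the linear map sending a Laurent polynomial P to Σ_{(i,j)} ε(j) P{(i,j)} mod n, where ε(j) = +1 if j mod n ∈ {0, 1, ..., n/2 − 1} and ε(j) = −1 otherwise. Then h⁰(−(Y−1)^n) = C(n, n/2) − 2 in Z_n, and this element is not a multiple of 8. -/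
open Finset Polynomial

theorem Finset.sum_range_ite_mod_lt_of_symm {G : Type*} [AddCommGroup G] {m : ℕ} (hm : 0 < m)
    {f : ℕ → G} (hf : ∀ i ≤ 2 * m, f (2 * m - i) = f i) :
    ∑ i ∈ range (2 * m + 1), (if i % (2 * m) < m then f i else -f i) = 2 • f 0 - f m := by
  rw [two_mul] at hf ⊢
  have hsymm : ∑ j ∈ range m, f (m + j) + f (m + m) = ∑ j ∈ range m, f j + f m := by
    rw [← sum_range_succ (fun j => f (m + j)), ← sum_range_succ, ← sum_range_reflect]
    refine sum_congr rfl fun j hj => ?_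
    rw [mem_range] at hj
    rw [show m + (m + 1 - 1 - j) = m + m - j by omega, hf j (by omega)]
  have hlow : ∀ i ∈ range m, (if i % (m + m) < m then f i else -f i) = f i := fun i hi => by
    rw [mem_range] at hi
    rw [if_pos (by rw [Nat.mod_eq_of_lt (by omega)]; exact hi)]
  have hhigh : ∀ j ∈ range m,
      (if (m + j) % (m + m) < m then f (m + j) else -f (m + j)) = -f (m + j) := fun j hj => by
    rw [mem_range] at hj
    rw [if_neg (by rw [Nat.mod_eq_of_lt (by omega)]; omega)]
  rw [sum_range_succ, sum_range_add, sum_congr rfl hlow, sum_congr rfl hhigh, sum_neg_distrib,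
    Nat.mod_self, if_pos hm, ← hf 0 (Nat.zero_le _), Nat.sub_zero, two_nsmul]
  linear_combination (norm := abel) -hsymm

theorem neg_one_pow_mul_choose_sub {n i : ℕ} (hn : Even n) (hi : i ≤ n) :
    (-1 : ℤ) ^ (n - i) * n.choose (n - i) = (-1) ^ i * n.choose i := by
  rw [Nat.choose_symm hi, neg_one_pow_congr (n := i) (by simp [Nat.even_sub hi, hn])]

theorem one_sub_mono_pow (n : ℕ) :
    (1 - mono 0 1) ^ n =
      ∑ i ∈ range (n + 1),
        AddMonoidAlgebra.single ((0 : ℤ), (i : ℤ)) ((-1) ^ i * (n.choose i : ℤ)) := by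
  rw [sub_eq_neg_add, add_pow]
  refine sum_congr rfl fun i _ => ?_
  rw [mono, ← AddMonoidAlgebra.single_neg, AddMonoidAlgebra.single_pow, one_pow, mul_one,
    AddMonoidAlgebra.natCast_def, AddMonoidAlgebra.single_mul_single]
  simp

theorem neg_mono_sub_one_pow_of_even {n : ℕ} (hn : Even n) :
    -(mono 0 1 - 1) ^ n = ∑ i ∈ range (n + 1),
      AddMonoidAlgebra.single ((0 : ℤ), (i : ℤ)) (-((-1) ^ i * (n.choose i : ℤ))) := by
  rw [← neg_sub, hn.neg_pow, one_sub_mono_pow, ← sum_neg_distrib]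
  simp only [AddMonoidAlgebra.single_neg]

theorem AddMonoidAlgebra.coeff_sum_single_sum_ite {ι R : Type*} [Ring R] (c : ℤ × ℤ → Prop)
    [DecidablePred c] (s : Finset ι) (p : ι → ℤ × ℤ) (a : ι → ℤ) :
    ((∑ i ∈ s, single (p i) (a i) : L).coeff.sum fun q b => if c q then (b : R) else -(b : R)) =
      ∑ i ∈ s, if c (p i) then (a i : R) else -(a i : R) := by
  rw [coeff_sum,
    ← Finsupp.sum_finsetSum_index (by simp) (by intros; split <;> push_cast <;> abel)]
  exact sum_congr rfl fun i _ => Finsupp.sum_single_index (by simp)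

theorem sq_add_four_mul_of_eight_eq_zero {A : Type*} [CommRing A] (h8 : (8 : A) = 0) (B R : A) :
    (B ^ 2 + 2 * B + 1 + 4 * R) ^ 2 = B ^ 4 + 6 * B ^ 2 + 1 + 4 * (B + B ^ 3) := by
  linear_combination ((B ^ 2 + 2 * B + 1) * R + 2 * R ^ 2) * h8

theorem X_add_one_pow_two_pow_succ (m : ℕ) :
    ∃ R : (ZMod 8)[X], (X + 1) ^ 2 ^ (m + 1) = (X ^ 2 ^ m) ^ 2 + 2 * X ^ 2 ^ m + 1 + 4 * R := by
  induction m with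
  | zero => exact ⟨0, by ring⟩
  | succ m ih =>
    obtain ⟨R, hR⟩ := ih
    refine ⟨X ^ 2 ^ m + (X ^ 2 ^ m) ^ 2 + (X ^ 2 ^ m) ^ 3, ?_⟩
    rw [pow_succ 2 (m + 1), pow_mul, hR,
      sq_add_four_mul_of_eight_eq_zero (CharP.ofNat_eq_zero _ 8), pow_succ 2 m, pow_mul]
    ring

theorem choose_two_pow_two_pow_pred_mod_eight {k : ℕ} (hk : 2 ≤ k) :
    (((2 ^ k).choose (2 ^ (k - 1)) : ℕ) : ZMod 8) = 6 := by
  obtain ⟨m, rfl⟩ := Nat.exists_eq_add_of_le' hk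
  rw [Nat.add_sub_assoc (by norm_num)]
  obtain ⟨R, hR⟩ := X_add_one_pow_two_pow_succ m
  have hsq : (X + 1 : (ZMod 8)[X]) ^ 2 ^ (m + 2) =
      (X ^ 2 ^ m) ^ 4 + 6 * (X ^ 2 ^ m) ^ 2 + 1 + 4 * (X ^ 2 ^ m + (X ^ 2 ^ m) ^ 3) := by
    rw [pow_succ 2 (m + 1), pow_mul, hR,
      sq_add_four_mul_of_eight_eq_zero (CharP.ofNat_eq_zero _ 8)]
  have hcoeff := congrArg (coeff · (2 ^ (m + 1))) hsq
  have hpos : 0 < 2 ^ m := by positivity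
  simp only [← pow_mul, coeff_X_add_one_pow] at hcoeff
  simpa [coeff_X_pow, coeff_one, pow_succ, coeff_ofNat_mul] using hcoeff

theorem choose_two_pow_sub_two_ne_eight_mul {k : ℕ} (hk : 3 ≤ k) (t : ZMod (2 ^ k)) :
    (((2 ^ k).choose (2 ^ (k - 1)) : ℕ) : ZMod (2 ^ k)) - 2 ≠ 8 * t := by
  intro h
  have h8 : 8 ∣ 2 ^ k := (pow_dvd_pow 2 hk : 2 ^ 3 ∣ 2 ^ k)
  have := congrArg (ZMod.castHom h8 (ZMod 8)) h
  rw [map_sub, map_mul, map_natCast, map_ofNat, map_ofNat,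
    choose_two_pow_two_pow_pred_mod_eight (by omega), show (8 : ZMod 8) = 0 from rfl,
    zero_mul] at this
  exact absurd this (by decide)

/-- For `n = 2^k`, `k ≥ 3`, and the map `h⁰ : ℤ[X^±,Y^±] → Z_n`
sending `P` to `Σ ε(j) P{(i,j)}` with `ε(j) = +1` iff `j mod n ∈ {0,…,n/2-1}`,
one has `h⁰(-(Y-1)^n) = C(n, n/2) - 2` in `Z_n`, and this element is not a
multiple of `8`. -/
theorem h0_of_engel_polynomial (k : ℕ) (hk : 3 ≤ k)
    (h0 : L → ZMod (2 ^ k))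
    (hh0 : ∀ P : L, h0 P = Finsupp.sum P.coeff fun p a =>
      if ((p.2 : ZMod (2 ^ k))).val < 2 ^ (k - 1)
      then (a : ZMod (2 ^ k)) else -(a : ZMod (2 ^ k))) :
    h0 (-((mono 0 1) - 1) ^ (2 ^ k)) =
      ((Nat.choose (2 ^ k) (2 ^ (k - 1)) : ℕ) : ZMod (2 ^ k)) - 2 ∧
    ¬ ∃ t : ZMod (2 ^ k), h0 (-((mono 0 1) - 1) ^ (2 ^ k)) = 8 * t := by
  have hn : 2 ^ k = 2 * 2 ^ (k - 1) := by rw [← pow_succ']; congr 1; omega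
  have hn_even : Even (2 ^ k) := Nat.even_pow.mpr ⟨even_two, by omega⟩
  have hm_even : Even (2 ^ (k - 1)) := Nat.even_pow.mpr ⟨even_two, by omega⟩
  set f : ℕ → ZMod (2 ^ k) := fun i =>
    ((-((-1) ^ i * ((2 ^ k).choose i : ℤ)) : ℤ) : ZMod (2 ^ k))
  have hsigned := Finset.sum_range_ite_mod_lt_of_symm (m := 2 ^ (k - 1)) (by positivity) (f := f)
    fun i hi => by rw [← hn] at hi ⊢; simp only [f, neg_one_pow_mul_choose_sub hn_even hi]
  -- `hn` can only be rewritten outside `ZMod (2 ^ k)`, hence in `hsigned` rather than in the goal.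
  rw [← hn] at hsigned
  have hval : h0 (-(mono 0 1 - 1) ^ 2 ^ k) = ((2 ^ k).choose (2 ^ (k - 1)) : ZMod (2 ^ k)) - 2 := by
    rw [hh0, neg_mono_sub_one_pow_of_even hn_even, AddMonoidAlgebra.coeff_sum_single_sum_ite]
    simp only [Int.cast_natCast, ZMod.val_natCast]
    rw [hsigned]
    simp only [f, pow_zero, hm_even.neg_one_pow, one_mul, Nat.choose_zero_right]
    push_cast
    ring
  exact ⟨hval, fun ⟨t, ht⟩ => choose_two_pow_sub_two_ne_eight_mul hk t (hval ▸ ht)⟩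
end

section
/- Let F₂ be the free group of rank 2, n a positive integer, R = F₂ⁿ F₂' and S = Rⁿ R'. Then S ≤ F₂ⁿ F₂'' and the quotient F₂/S has order n^{3 + n²}. Consequently the free metabelian group M(2,n) = F₂/(F₂ⁿ F₂'') of exponent n satisfies |M(2,n)| ≤ n^{n² + 3}. -/
/-- The subgroup `F₂ⁿ` of `F₂` generated by all `n`-th powers. -/
def pw (n : ℕ) : Subgroup F2 := Subgroup.closure {g : F2 | ∃ h : F2, h ^ n = g}
/-- The subgroup `Hⁿ` of `F₂` generated by the `n`-th powers of elements of `H`. -/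
def pwOf (H : Subgroup F2) (n : ℕ) : Subgroup F2 :=
  Subgroup.closure {g : F2 | ∃ h ∈ H, h ^ n = g}

/-!
`R = F₂ⁿF₂'` is the kernel of the abelianization `π : F₂ → (ℤ/n)²`, so `[F₂ : S] = n² · [R : S]`
with `R/S` abelian of exponent `n`. Schreier's lemma for the transversal `xᵃyᵇ` (`0 ≤ a, b < n`)
generates `R` by one element for each edge of the Cayley graph of `(ℤ/n)²` outside the spanning
tree traced by these words: `2n² - (n² - 1) = n² + 1` generators, so `|R/S| ≤ n^{n²+1}`.
Conversely, the mod-`n` Fox derivatives, read off the Magnus embedding into `(ℤ/n)² ≀ (ℤ/n)²`,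
count how often a path crosses a given edge; on `R` they are additive and kill `S`. The Schreier
generator of a cotree edge crosses that edge once and no other cotree edge, so the Fox derivatives
at the cotree edges form a dual basis and `R/S ≅ (ℤ/n)^{n²+1}`.
-/

open Subgroup
open scoped IsMulCommutative commutatorElement

section DualBasis

variable {G : Type*} [CommGroup G] {ι : Type*} [Fintype ι] {n : ℕ} [NeZero n]

theorem exists_prod_pow_val_eq (hexp : ∀ x : G, x ^ n = 1) {g : ι → G}
    (hg : closure (Set.range g) = ⊤) (x : G) :
    ∃ c : ι → ZMod n, ∏ i, g i ^ (c i).val = x := by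
  obtain ⟨a, rfl⟩ := exists_of_mem_closure_range g x (hg ▸ mem_top x)
  refine ⟨fun i => a i, Finset.prod_congr rfl fun i _ => ?_⟩
  rw [← zpow_natCast, ZMod.val_intCast, ← zpow_eq_zpow_emod' _ (hexp _)]

theorem bijective_of_map_eq_single [DecidableEq ι] (hexp : ∀ x : G, x ^ n = 1) {g : ι → G}
    (hg : closure (Set.range g) = ⊤) (θ : G →* Multiplicative (ι → ZMod n))
    (hθ : ∀ i, θ (g i) = .ofAdd (Pi.single i 1)) : Function.Bijective θ := by
  have hθ_prod (c : ι → ZMod n) : θ (∏ i, g i ^ (c i).val) = .ofAdd c := by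
    simp only [map_prod, map_pow, hθ, ← ofAdd_nsmul, ← ofAdd_sum, ← Pi.single_smul, nsmul_one,
      ZMod.natCast_zmod_val]
    congr 1
    ext j
    simp
  refine ⟨fun x y hxy => ?_, fun c => ⟨_, hθ_prod c.toAdd⟩⟩
  obtain ⟨c, rfl⟩ := exists_prod_pow_val_eq hexp hg x
  obtain ⟨d, rfl⟩ := exists_prod_pow_val_eq hexp hg y
  rw [hθ_prod, hθ_prod, Multiplicative.ofAdd.injective.eq_iff] at hxy
  rw [hxy]

end DualBasis

theorem closure_range_comp_eq_top {G H ι : Type*} [Group G] [Group H] {f : G →* H}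
    (hf : Function.Surjective f) {s : ι → G} (hs : closure (Set.range s) = ⊤) :
    closure (Set.range (f ∘ s)) = ⊤ := by
  rw [Set.range_comp, ← MonoidHom.map_closure, hs, ← MonoidHom.range_eq_map,
    MonoidHom.range_eq_top.mpr hf]

theorem closure_range_schreier_eq_ker {G Q ι : Type*} [Group G] [Group Q] (π : G →* Q)
    (rep : Q → G) (hrep : ∀ q, π (rep q) = q) (hrep_one : rep 1 = 1) (s : ι → G)
    (hs : closure (Set.range s) = ⊤) :
    closure (Set.range fun p : Q × ι => rep p.1 * s p.2 * (rep (p.1 * π (s p.2)))⁻¹) =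
      π.ker := by
  have hT : IsComplement (π.ker : Set G) (Set.range rep) := by
    refine isComplement_iff_existsUnique_mul_inv_mem.mpr fun g =>
      ⟨⟨rep (π g), π g, rfl⟩, by simp [hrep], ?_⟩
    rintro ⟨_, q, rfl⟩ hq
    simp_all [mul_inv_eq_one]
  have hT_fun (g : G) : (hT.toRightFun g : G) = rep (π g) :=
    congrArg Subtype.val <| (isComplement_iff_existsUnique_mul_inv_mem.mp hT g).unique
      (hT.mul_inv_toRightFun_mem g) (y₂ := ⟨rep (π g), π g, rfl⟩) (by simp [hrep])
  rw [← closure_mul_image_eq hT ⟨1, hrep_one⟩ hs]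
  congr 1
  ext x
  simp [Set.mem_mul, hT_fun, hrep]

theorem closure_range_subtype_eq_top {G ι : Type*} [Group G] {H : Subgroup G} {s : ι → H}
    (hs : closure (Set.range fun i => (s i : G)) = H) : closure (Set.range s) = ⊤ := by
  apply map_injective H.subtype_injective
  rw [MonoidHom.map_closure, ← Set.range_comp, ← MonoidHom.range_eq_map, range_subtype]
  exact hs

theorem commutator_sup_le {G : Type*} [Group G] (N A : Subgroup G) [N.Normal] :
    ⁅N ⊔ A, N ⊔ A⁆ ≤ N ⊔ ⁅A, A⁆ := by
  have hN : N.map (QuotientGroup.mk' N) = ⊥ := by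
    rw [Subgroup.map_eq_bot_iff, QuotientGroup.ker_mk']
  calc ⁅N ⊔ A, N ⊔ A⁆ ≤ comap (QuotientGroup.mk' N) (map (QuotientGroup.mk' N) ⁅A, A⁆) := by
        rw [← map_le_iff_le_comap, map_commutator, Subgroup.map_sup, hN, bot_sup_eq,
          map_commutator]
    _ = N ⊔ ⁅A, A⁆ := by rw [comap_map_eq, QuotientGroup.ker_mk', sup_comm]

theorem ZMod.natCast_eq_neg_one_iff {n i : ℕ} (hi : i < n) :
    (i : ZMod n) = -1 ↔ i + 1 = n := by
  rw [eq_neg_iff_add_eq_zero, ← Nat.cast_add_one, ZMod.natCast_eq_zero_iff]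
  exact ⟨fun h => le_antisymm hi (Nat.le_of_dvd i.succ_pos h), fun h => h ▸ dvd_rfl⟩

theorem ZMod.val_add_one_of_ne_neg_one {n : ℕ} [NeZero n] {a : ZMod n} (ha : a ≠ -1) :
    (a + 1).val = a.val + 1 := by
  rw [Ne, ← ZMod.natCast_zmod_val a, ZMod.natCast_eq_neg_one_iff (ZMod.val_lt a)] at ha
  have hlt : a.val + 1 < n := lt_of_le_of_ne (ZMod.val_lt a) ha
  rw [← ZMod.val_cast_of_lt hlt, Nat.cast_add_one, ZMod.natCast_zmod_val]

theorem Multiplicative.pi_zmod_pow_eq_one {ι : Type*} {n : ℕ}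
    (a : Multiplicative (ι → ZMod n)) : a ^ n = 1 := by
  rw [← ofAdd_toAdd a, ← ofAdd_nsmul, ← ofAdd_zero]
  congr 1
  ext i
  simp

section PowerCommutator

variable {n : ℕ} {H : Subgroup F2}

theorem pwOf_sup_commutator_le : pwOf H n ⊔ ⁅H, H⁆ ≤ H := by
  refine sup_le ?_ (commutator_le_self H)
  rw [pwOf, closure_le]
  rintro _ ⟨h, hh, rfl⟩
  exact pow_mem hh n

theorem pow_mem_subgroupOf_pwOf_sup_commutator (x : H) :
    x ^ n ∈ (pwOf H n ⊔ ⁅H, H⁆).subgroupOf H :=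
  mem_sup_left (subset_closure ⟨x, x.2, rfl⟩)

theorem commutator_le_subgroupOf_pwOf_sup_commutator :
    commutator H ≤ (pwOf H n ⊔ ⁅H, H⁆).subgroupOf H := by
  rw [commutator_def, commutator_le]
  rintro x - y -
  exact mem_sup_right (commutator_mem_commutator x.2 y.2)

theorem subgroupOf_pwOf_sup_commutator_le_ker {A : Type*} [CommGroup A]
    (hA : ∀ a : A, a ^ n = 1) (f : H →* A) : (pwOf H n ⊔ ⁅H, H⁆).subgroupOf H ≤ f.ker := by
  rintro x (hx : (x : F2) ∈ pwOf H n ⊔ ⁅H, H⁆)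
  suffices pwOf H n ⊔ ⁅H, H⁆ ≤ f.ker.map H.subtype by
    obtain ⟨y, hy, hyx⟩ := this hx
    rwa [Subtype.ext hyx] at hy
  refine sup_le ?_ (commutator_le.mpr fun g hg h hh =>
    ⟨(⁅(⟨g, hg⟩ : H), (⟨h, hh⟩ : H)⁆ : H), ?_, rfl⟩)
  · rw [pwOf, closure_le]
    rintro _ ⟨h, hh, rfl⟩
    exact ⟨⟨h, hh⟩ ^ n, by rw [SetLike.mem_coe, MonoidHom.mem_ker, map_pow, hA], rfl⟩
  · simp [MonoidHom.mem_ker, map_commutatorElement, commutatorElement_eq_one_iff_mul_comm,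
      mul_comm]

instance pw_normal : (pw n).Normal :=
  normalizer_eq_top_iff.mp <| top_le_iff.mp <| le_normalizer_closure_iff.mpr
    fun g _ _ ⟨h, hh⟩ => subset_closure ⟨g * h * g⁻¹, hh ▸ conj_pow⟩

theorem pwOf_le_pw : pwOf H n ≤ pw n :=
  closure_mono fun _ ⟨h, _, hh⟩ => ⟨h, hh⟩

end PowerCommutator

namespace F2

variable (n : ℕ)

/-- `(ℤ/n)²` written multiplicatively, with coordinates `true` (for `x`) and `false` (for `y`):
the quotient `F₂/R`, and the vertex set of its Cayley graph. -/
abbrev Q := Multiplicative (Bool → ZMod n)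

def proj : F2 →* Q n := FreeGroup.lift fun b => .ofAdd (Pi.single b 1)

@[simp] theorem proj_of (b : Bool) : proj n (.of b) = .ofAdd (Pi.single b 1) := by
  simp [proj]

def rep (q : Q n) : F2 := .of true ^ (q.toAdd true).val * .of false ^ (q.toAdd false).val

theorem rep_one : rep n 1 = 1 := by
  simp [rep]

theorem proj_rep [NeZero n] (q : Q n) : proj n (rep n q) = q := by
  rw [← ofAdd_toAdd q]
  simp only [rep, map_mul, map_pow, proj_of, ← ofAdd_nsmul, ← ofAdd_add, toAdd_ofAdd,
    ← Pi.single_smul, nsmul_one, ZMod.natCast_zmod_val]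
  congr 1
  ext b
  cases b <;> simp

theorem proj_surjective [NeZero n] : Function.Surjective (proj n) :=
  fun q => ⟨rep n q, proj_rep n q⟩

theorem index_ker_proj [NeZero n] : (proj n).ker.index = n ^ 2 := by
  rw [Subgroup.index_ker, MonoidHom.range_eq_top.mpr (proj_surjective n), Subgroup.card_top,
    Nat.card_congr Multiplicative.toAdd, Nat.card_fun, Nat.card_zmod,
    Nat.card_eq_fintype_card (α := Bool), Fintype.card_bool]

theorem ker_proj [NeZero n] : (proj n).ker = pw n ⊔ commutator F2 := by
  set R := pw n ⊔ commutator F2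
  have hR : R ≤ (proj n).ker := by
    refine sup_le ?_ (Abelianization.commutator_subset_ker _)
    rw [pw, closure_le]
    rintro _ ⟨h, rfl⟩
    rw [SetLike.mem_coe, MonoidHom.mem_ker, map_pow, Multiplicative.pi_zmod_pow_eq_one]
  have : R.Normal := .of_commutator_le F2 le_sup_right
  have : IsMulCommutative (F2 ⧸ R) :=
    Subgroup.Normal.quotient_commutative_iff_commutator_le.mpr le_sup_right
  have hexp (x : F2 ⧸ R) : x ^ n = 1 := by
    induction x using QuotientGroup.induction_on with | _ g =>
    rw [← QuotientGroup.mk_pow, QuotientGroup.eq_one_iff]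
    exact mem_sup_left (subset_closure ⟨g, rfl⟩)
  have hbij := bijective_of_map_eq_single hexp
    (closure_range_comp_eq_top (QuotientGroup.mk'_surjective R) (FreeGroup.closure_range_of Bool))
    (QuotientGroup.lift R (proj n) hR) (by simp)
  refine le_antisymm (fun g hg => ?_) hR
  rw [← QuotientGroup.eq_one_iff]
  exact hbij.1 (by simpa using hg)

def schreierGen (e : Q n × Bool) : F2 :=
  rep n e.1 * .of e.2 * (rep n (e.1 * proj n (.of e.2)))⁻¹

theorem closure_range_schreierGen [NeZero n] :
    closure (Set.range (schreierGen n)) = (proj n).ker :=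
  closure_range_schreier_eq_ker (proj n) (rep n) (proj_rep n) (rep_one n) FreeGroup.of
    (FreeGroup.closure_range_of Bool)

/-- The edge `(v, b)` joins `v` to `v * proj (of b)`. The tree consists of the `x`-edges along the
row `y = 0` except the one leaving `(-1, 0)`, and the `y`-edges except those leaving the row
`y = -1`; its path from `1` to `v` spells `rep v`. -/
def IsTreeEdge : Q n × Bool → Prop
  | (v, true) => v.toAdd false = 0 ∧ v.toAdd true ≠ -1
  | (v, false) => v.toAdd false ≠ -1

theorem schreierGen_eq_one [NeZero n] {e : Q n × Bool} (he : IsTreeEdge n e) :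
    schreierGen n e = 1 := by
  obtain ⟨v, _ | _⟩ := e
  · have hrep : rep n (v * proj n (.of false)) = rep n v * .of false := by
      simp [rep, ZMod.val_add_one_of_ne_neg_one he, pow_succ, mul_assoc]
    exact mul_inv_eq_one.mpr hrep.symm
  · obtain ⟨hv0, hv⟩ := he
    have hrep : rep n (v * proj n (.of true)) = rep n v * .of true := by
      simp [rep, ZMod.val_add_one_of_ne_neg_one hv, hv0, pow_succ]
    exact mul_inv_eq_one.mpr hrep.symm

/-- Enumerates the `n² + 1` edges outside the tree: a vertex `v` off the row `y = 0` names its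
outgoing `x`-edge, a vertex `(a, 0)` names the `y`-edge entering it, and `()` names the `x`-edge
from `(-1, 0)` to `1`. -/
def cotreeEdge : Q n ⊕ Unit → Q n × Bool
  | .inl v => if v.toAdd false = 0 then (v / .ofAdd (Pi.single false 1), false) else (v, true)
  | .inr () => ((.ofAdd (Pi.single true 1))⁻¹, true)

theorem not_isTreeEdge_cotreeEdge (k : Q n ⊕ Unit) : ¬IsTreeEdge n (cotreeEdge n k) := by
  rcases k with v | ⟨⟩
  · by_cases hv : v.toAdd false = 0 <;> simp [cotreeEdge, IsTreeEdge, hv]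
  · simp [cotreeEdge, IsTreeEdge]

theorem mem_range_cotreeEdge {e : Q n × Bool} (he : ¬IsTreeEdge n e) :
    e ∈ Set.range (cotreeEdge n) := by
  obtain ⟨v, _ | _⟩ := e
  · refine ⟨.inl (v * .ofAdd (Pi.single false 1)), ?_⟩
    simp_all [cotreeEdge, IsTreeEdge]
  · by_cases hv : v.toAdd false = 0
    · refine ⟨.inr (), ?_⟩
      simp only [IsTreeEdge, hv, true_and, not_not] at he
      refine Prod.ext (Multiplicative.toAdd.injective ?_) rfl
      ext b
      cases b <;> simp [cotreeEdge, hv, he]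
    · exact ⟨.inl v, by simp [cotreeEdge, hv]⟩

theorem cotreeEdge_injective : Function.Injective (cotreeEdge n) := by
  rintro (v | ⟨⟩) (w | ⟨⟩) h
  · by_cases hv : v.toAdd false = 0 <;> by_cases hw : w.toAdd false = 0 <;> simp_all [cotreeEdge]
  · by_cases hv : v.toAdd false = 0 <;> simp_all [cotreeEdge]
  · by_cases hw : w.toAdd false = 0 <;> simp_all [cotreeEdge, eq_comm]
  · rfl

theorem closure_range_schreierGen_cotreeEdge [NeZero n] :
    closure (Set.range (schreierGen n ∘ cotreeEdge n)) = (proj n).ker := by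
  rw [← closure_range_schreierGen n]
  refine le_antisymm (closure_mono (Set.range_comp_subset_range _ _)) ?_
  rw [closure_le]
  rintro _ ⟨e, rfl⟩
  by_cases he : IsTreeEdge n e
  · rw [SetLike.mem_coe, schreierGen_eq_one n he]
    exact one_mem _
  · obtain ⟨k, rfl⟩ := mem_range_cotreeEdge n he
    exact subset_closure ⟨k, rfl⟩

def magnus : F2 →* Q n ≀ᵣ Q n :=
  FreeGroup.lift fun b => ⟨Pi.mulSingle 1 (.ofAdd (Pi.single b 1)), .ofAdd (Pi.single b 1)⟩

theorem magnus_right (w : F2) : (magnus n w).right = proj n w := by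
  have : RegularWreathProduct.rightHom.comp (magnus n) = proj n :=
    FreeGroup.ext_hom _ _ fun b => by simp [magnus, proj]
  exact DFunLike.congr_fun this w

/-- The coefficient of `q` in the Fox derivative `∂w/∂b`, reduced mod `n`: the signed number of
times the path of `w` in the Cayley graph of `Q n` crosses the edge `(q, b)`. -/
def foxDeriv (w : F2) (e : Q n × Bool) : ZMod n := ((magnus n w).left e.1).toAdd e.2

theorem foxDeriv_one (e : Q n × Bool) : foxDeriv n 1 e = 0 := by
  simp [foxDeriv]

theorem foxDeriv_mul (u v : F2) (e : Q n × Bool) :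
    foxDeriv n (u * v) e = foxDeriv n u e + foxDeriv n v ((proj n u)⁻¹ * e.1, e.2) := by
  simp [foxDeriv, magnus_right]

theorem foxDeriv_of (b : Bool) (e : Q n × Bool) :
    foxDeriv n (.of b) e = if e = (1, b) then 1 else 0 := by
  obtain ⟨q, c⟩ := e
  by_cases hq : q = 1 <;> by_cases hc : c = b <;> simp [foxDeriv, magnus, hq, hc]

theorem foxDeriv_of_pow_ne_zero {b : Bool} {m : ℕ} {e : Q n × Bool}
    (h : foxDeriv n (.of b ^ m) e ≠ 0) : e.2 = b ∧ ∃ i < m, e.1 = .ofAdd (Pi.single b i) := by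
  induction m with
  | zero => simp [foxDeriv_one] at h
  | succ m ih =>
    rw [pow_succ, foxDeriv_mul] at h
    by_cases h' : foxDeriv n (.of b ^ m) e = 0
    · rw [h', zero_add, foxDeriv_of] at h
      simp only [map_pow, proj_of, ite_ne_right_iff, Prod.ext_iff, inv_mul_eq_one] at h
      refine ⟨h.1.2, m, m.lt_succ_self, ?_⟩
      rw [← h.1.1, ← ofAdd_nsmul, ← Pi.single_smul, nsmul_one]
    · obtain ⟨hb, i, hi, he⟩ := ih h'
      exact ⟨hb, i, hi.trans m.lt_succ_self, he⟩

theorem isTreeEdge_of_foxDeriv_rep_ne_zero [NeZero n] {t : Q n} {e : Q n × Bool}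
    (h : foxDeriv n (rep n t) e ≠ 0) : IsTreeEdge n e := by
  have hne (c : ZMod n) {i : ℕ} (hi : i < c.val) : (i : ZMod n) ≠ -1 := by
    rw [Ne, ZMod.natCast_eq_neg_one_iff (hi.trans (ZMod.val_lt c))]
    have := ZMod.val_lt c
    omega
  obtain ⟨q, c⟩ := e
  rw [rep, foxDeriv_mul] at h
  by_cases hx : foxDeriv n (.of true ^ (t.toAdd true).val) (q, c) = 0
  · rw [hx, zero_add] at h
    obtain ⟨rfl, j, hj, hq⟩ := foxDeriv_of_pow_ne_zero n h
    rw [inv_mul_eq_iff_eq_mul] at hq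
    subst hq
    simp [IsTreeEdge, hne _ hj]
  · obtain ⟨rfl, i, hi, rfl⟩ := foxDeriv_of_pow_ne_zero n hx
    simp [IsTreeEdge, hne _ hi]

theorem schreierGen_mem_ker [NeZero n] (e : Q n × Bool) : schreierGen n e ∈ (proj n).ker :=
  closure_range_schreierGen n ▸ subset_closure ⟨e, rfl⟩

theorem foxDeriv_mul_of_mem_ker {u : F2} (hu : u ∈ (proj n).ker) (v : F2) (e : Q n × Bool) :
    foxDeriv n (u * v) e = foxDeriv n u e + foxDeriv n v e := by
  rw [foxDeriv_mul, MonoidHom.mem_ker.mp hu, inv_one, one_mul]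

theorem foxDeriv_schreierGen [NeZero n] (e' e : Q n × Bool) :
    foxDeriv n (schreierGen n e') e = foxDeriv n (rep n e'.1) e + (if e = e' then 1 else 0) -
      foxDeriv n (rep n (e'.1 * proj n (.of e'.2))) e := by
  have hsplit : rep n e'.1 * .of e'.2 =
      schreierGen n e' * rep n (e'.1 * proj n (.of e'.2)) := by
    simp [schreierGen]
  have h := foxDeriv_mul n (rep n e'.1) (.of e'.2) e
  rw [hsplit, foxDeriv_mul_of_mem_ker n (schreierGen_mem_ker n e'), foxDeriv_of, proj_rep] at h
  rw [eq_sub_iff_add_eq, h]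
  simp [Prod.ext_iff, inv_mul_eq_one, eq_comm]

theorem foxDeriv_rep_cotreeEdge [NeZero n] (t : Q n) (k : Q n ⊕ Unit) :
    foxDeriv n (rep n t) (cotreeEdge n k) = 0 :=
  by_contra fun h => not_isTreeEdge_cotreeEdge n k (isTreeEdge_of_foxDeriv_rep_ne_zero n h)

def foxHom [NeZero n] : (proj n).ker →* Multiplicative (Q n ⊕ Unit → ZMod n) where
  toFun r := .ofAdd fun k => foxDeriv n r (cotreeEdge n k)
  map_one' := congrArg Multiplicative.ofAdd (funext fun _ => foxDeriv_one n _)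
  map_mul' r s := by
    simp only [coe_mul, foxDeriv_mul_of_mem_ker n r.2, ← ofAdd_add]
    rfl

theorem foxHom_schreierGen_cotreeEdge [NeZero n] (k : Q n ⊕ Unit) :
    foxHom n ⟨schreierGen n (cotreeEdge n k), schreierGen_mem_ker n _⟩ =
      .ofAdd (Pi.single k 1) := by
  simp only [foxHom, MonoidHom.coe_mk, OneHom.coe_mk, foxDeriv_schreierGen,
    foxDeriv_rep_cotreeEdge, (cotreeEdge_injective n).eq_iff]
  congr 1
  ext k'
  simp [Pi.single_apply]

theorem relIndex_pwOf_sup_commutator_ker_proj [NeZero n] :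
    (pwOf (proj n).ker n ⊔ ⁅(proj n).ker, (proj n).ker⁆).relIndex (proj n).ker =
      n ^ (n ^ 2 + 1) := by
  set H := (proj n).ker
  set N := (pwOf H n ⊔ ⁅H, H⁆).subgroupOf H
  have : N.Normal := .of_commutator_le H commutator_le_subgroupOf_pwOf_sup_commutator
  have : IsMulCommutative (H ⧸ N) :=
    Subgroup.Normal.quotient_commutative_iff_commutator_le.mpr
      commutator_le_subgroupOf_pwOf_sup_commutator
  have hexp (x : H ⧸ N) : x ^ n = 1 := by
    induction x using QuotientGroup.induction_on with | _ g =>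
    rw [← QuotientGroup.mk_pow, QuotientGroup.eq_one_iff]
    exact pow_mem_subgroupOf_pwOf_sup_commutator g
  have hgen := closure_range_comp_eq_top (QuotientGroup.mk'_surjective N)
    (closure_range_subtype_eq_top (s := fun k => ⟨_, schreierGen_mem_ker n (cotreeEdge n k)⟩)
      (closure_range_schreierGen_cotreeEdge n))
  have hbij := bijective_of_map_eq_single hexp hgen
    (QuotientGroup.lift N (foxHom n) (subgroupOf_pwOf_sup_commutator_le_ker
      Multiplicative.pi_zmod_pow_eq_one _))
    (foxHom_schreierGen_cotreeEdge n)
  rw [relIndex, index, Nat.card_eq_of_bijective _ hbij, Nat.card_congr Multiplicative.toAdd,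
    Nat.card_fun, Nat.card_zmod, Nat.card_sum, Nat.card_congr Multiplicative.toAdd, Nat.card_fun,
    Nat.card_zmod, Nat.card_eq_fintype_card (α := Bool), Fintype.card_bool,
    Nat.card_eq_fintype_card (α := Unit), Fintype.card_unit]

theorem index_pwOf_sup_commutator [NeZero n] :
    (pwOf (pw n ⊔ commutator F2) n ⊔ ⁅pw n ⊔ commutator F2, pw n ⊔ commutator F2⁆).index =
      n ^ (3 + n ^ 2) := by
  rw [← ker_proj, ← relIndex_mul_index pwOf_sup_commutator_le,
    relIndex_pwOf_sup_commutator_ker_proj, index_ker_proj]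
  ring

end F2

/-- With `R = F₂ⁿF₂'` and `S = RⁿR'`, one has `S ≤ F₂ⁿF₂''` and
`|F₂/S| = n^{3+n²}`; consequently `|M(2,n)| = |F₂/(F₂ⁿF₂'')| ≤ n^{n²+3}`. -/
theorem metabelian_upper_bound_newman (n : ℕ) (hn : 0 < n) :
    pwOf (pw n ⊔ commutator F2) n ⊔
        ⁅pw n ⊔ commutator F2, pw n ⊔ commutator F2⁆ ≤
      pw n ⊔ ⁅commutator F2, commutator F2⁆ ∧
    Nat.card (F2 ⧸ (pwOf (pw n ⊔ commutator F2) n ⊔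
        ⁅pw n ⊔ commutator F2, pw n ⊔ commutator F2⁆)) = n ^ (3 + n ^ 2) ∧
    Nat.card (F2 ⧸ (pw n ⊔ ⁅commutator F2, commutator F2⁆)) ≤ n ^ (n ^ 2 + 3) := by
  have : NeZero n := ⟨hn.ne'⟩
  set R := pw n ⊔ commutator F2
  have hle : pwOf R n ⊔ ⁅R, R⁆ ≤ pw n ⊔ ⁅commutator F2, commutator F2⁆ :=
    sup_le (le_sup_of_le_left pwOf_le_pw) (commutator_sup_le _ _)
  have hindex : (pwOf R n ⊔ ⁅R, R⁆).index = n ^ (3 + n ^ 2) := F2.index_pwOf_sup_commutator n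
  have : (pwOf R n ⊔ ⁅R, R⁆).FiniteIndex := ⟨by rw [hindex]; positivity⟩
  exact ⟨hle, hindex, (index_antitone hle).trans_eq (by rw [hindex, add_comm])⟩
end

section
/- Let n ≥ 1. The area invariant A : F₂' → Z, A(z) = P_z(1,1) (evaluation of the winding invariant at X = Y = 1), induces an isomorphism from N(2,n)' to Z_{n/2} if n is even and to Z_n if n is odd, where N(2,n) = F₂/(γ₃(F₂) F₂ⁿ) is the free nilpotent group of class 2, rank 2 and exponent n. Consequently |N(2,n)| = n³/2 for n even and |N(2,n)| = n³ for n odd. -/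
open scoped commutatorElement

section GroupTheory

variable {G : Type*} [Group G]

theorem commutatorElement_zpow_right_of_commute {g h : G} (hc : Commute ⁅g, h⁆ h) (b : ℤ) :
    ⁅g, h ^ b⁆ = ⁅g, h⁆ ^ b :=
  calc ⁅g, h ^ b⁆ = (g * h * g⁻¹) ^ b * h ^ (-b) := by
        rw [commutatorElement_def, conj_zpow, zpow_neg]
    _ = (⁅g, h⁆ * h) ^ b * h ^ (-b) := by rw [commutatorElement_def]; group
    _ = ⁅g, h⁆ ^ b := by rw [hc.mul_zpow, mul_assoc, ← zpow_add, add_neg_cancel, zpow_zero, mul_one]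

theorem commutatorElement_zpow_left_of_commute {g h : G} (hc : Commute ⁅g, h⁆ g) (a : ℤ) :
    ⁅g ^ a, h⁆ = ⁅g, h⁆ ^ a := by
  have hc' : Commute ⁅h, g⁆ g := by rw [← commutatorElement_inv]; exact hc.inv_left
  rw [← commutatorElement_inv, commutatorElement_zpow_right_of_commute hc', ← inv_zpow,
    commutatorElement_inv]

theorem commutatorElement_zpow_zpow_of_mem_center {g h : G} (hc : ⁅g, h⁆ ∈ Subgroup.center G)
    (a b : ℤ) : ⁅g ^ a, h ^ b⁆ = ⁅g, h⁆ ^ (a * b) := by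
  have hcentral : ∀ (k : ℤ) (x : G), Commute (⁅g, h⁆ ^ k) x := fun k x =>
    (Subgroup.mem_center_iff.mp (zpow_mem hc k) x).symm
  have hleft : ⁅g ^ a, h⁆ = ⁅g, h⁆ ^ a :=
    commutatorElement_zpow_left_of_commute (by simpa using hcentral 1 g) a
  rw [commutatorElement_zpow_right_of_commute (by rw [hleft]; exact hcentral a h), hleft, zpow_mul]

theorem QuotientGroup.commutatorElement_mem_center_of_lowerCentralSeries_two
    (g h : G ⧸ (⊤ : Subgroup G).lowerCentralSeries 2) :
    ⁅g, h⁆ ∈ Subgroup.center (G ⧸ (⊤ : Subgroup G).lowerCentralSeries 2) := by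
  rw [Subgroup.mem_center_iff]
  intro q
  induction g using QuotientGroup.induction_on with | H g =>
  induction h using QuotientGroup.induction_on with | H h =>
  induction q using QuotientGroup.induction_on with | H k =>
  have hmem : ⁅⁅g, h⁆, k⁆ ∈ (⊤ : Subgroup G).lowerCentralSeries 2 :=
    Subgroup.lowerCentralSeries_isDescendingCentralSeries.2 _ 1
      (Subgroup.commutator_mem_commutator (Subgroup.mem_top g) (Subgroup.mem_top h)) k
  have hone := (QuotientGroup.eq_one_iff _).mpr hmem
  rw [← QuotientGroup.mk'_apply, map_commutatorElement, map_commutatorElement,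
    commutatorElement_eq_one_iff_commute] at hone
  exact hone.symm.eq

theorem map_eq_one_of_mem_commutator_top {M : Type*} [Group M] {N : Subgroup G} [N.Normal]
    (φ : N →* M) (hφ : ∀ (g : G) (z : N) (h : g * z * g⁻¹ ∈ N), φ ⟨g * z * g⁻¹, h⟩ = φ z)
    {z : N} (hz : (z : G) ∈ ⁅N, (⊤ : Subgroup G)⁆) : φ z = 1 := by
  have hle : ⁅N, (⊤ : Subgroup G)⁆ ≤ φ.ker.map N.subtype := by
    rw [Subgroup.commutator_le]
    intro p hp q _
    have hconj : q * p⁻¹ * q⁻¹ ∈ N := ‹N.Normal›.conj_mem _ (inv_mem hp) q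
    refine ⟨⟨p, hp⟩ * ⟨q * p⁻¹ * q⁻¹, hconj⟩, ?_, by simp [commutatorElement_def, mul_assoc]⟩
    rw [SetLike.mem_coe, MonoidHom.mem_ker, map_mul,
      show φ ⟨q * p⁻¹ * q⁻¹, hconj⟩ = φ ⟨p, hp⟩⁻¹ from hφ q ⟨p, hp⟩⁻¹ hconj, map_inv,
      mul_inv_cancel]
  obtain ⟨w, hw, hwz⟩ := hle hz
  rwa [← Subtype.ext hwz]

variable (G) in
def powersClosure (n : ℕ) : Subgroup G := Subgroup.closure {g | ∃ h : G, h ^ n = g}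

theorem map_powersClosure_of_surjective {H : Type*} [Group H] {f : G →* H}
    (hf : Function.Surjective f) (n : ℕ) : (powersClosure G n).map f = powersClosure H n := by
  rw [powersClosure, MonoidHom.map_closure, powersClosure]
  congr 1
  ext q
  constructor
  · rintro ⟨_, ⟨h, rfl⟩, rfl⟩
    exact ⟨f h, (map_pow _ _ _).symm⟩
  · rintro ⟨r, rfl⟩
    obtain ⟨h, rfl⟩ := hf r
    exact ⟨h ^ n, ⟨h, rfl⟩, map_pow _ _ _⟩

end GroupTheory

theorem Nat.gcd_self_choose_two (n : ℕ) : n.gcd (n.choose 2) = if Even n then n / 2 else n := by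
  rcases Nat.even_or_odd' n with ⟨m, rfl | rfl⟩
  · rw [if_pos (even_two_mul m), Nat.mul_div_cancel_left _ two_pos]
    rcases m with _ | m
    · simp
    rw [Nat.choose_two_right, show 2 * (m + 1) * (2 * (m + 1) - 1) = 2 * ((m + 1) * (2 * m + 1)) by
        rw [show 2 * (m + 1) - 1 = 2 * m + 1 by omega]; ring,
      Nat.mul_div_cancel_left _ two_pos, mul_comm 2, Nat.gcd_mul_left,
      Nat.coprime_two_left.mpr (odd_two_mul_add_one m), mul_one]
  · rw [if_neg (Nat.not_even_iff_odd.mpr (odd_two_mul_add_one m)), Nat.choose_two_right,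
      show (2 * m + 1) * (2 * m + 1 - 1) = 2 * ((2 * m + 1) * m) by rw [Nat.add_sub_cancel]; ring,
      Nat.mul_div_cancel_left _ two_pos, Nat.gcd_mul_right_right]

theorem Nat.mul_self_mul_gcd_choose_two (n : ℕ) :
    n * n * n.gcd (n.choose 2) = if Even n then n ^ 3 / 2 else n ^ 3 := by
  rw [Nat.gcd_self_choose_two]
  split_ifs with h
  · obtain ⟨m, rfl⟩ := h
    rw [← two_mul, show (2 * m) ^ 3 = 2 * (2 * m * (2 * m) * m) by ring,
      Nat.mul_div_cancel_left _ two_pos, Nat.mul_div_cancel_left _ two_pos]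
  · ring

/-- `⟨a, b, c⟩` is the unitriangular matrix `[[1, a, c], [0, 1, b], [0, 0, 1]]`. -/
@[ext] structure Heisenberg where
  a : ℤ
  b : ℤ
  c : ℤ

namespace Heisenberg

instance : Mul Heisenberg := ⟨fun p q => ⟨p.a + q.a, p.b + q.b, p.c + q.c + p.a * q.b⟩⟩
instance : One Heisenberg := ⟨⟨0, 0, 0⟩⟩
instance : Inv Heisenberg := ⟨fun p => ⟨-p.a, -p.b, -p.c + p.a * p.b⟩⟩

@[simp] theorem mul_a (p q : Heisenberg) : (p * q).a = p.a + q.a := rfl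
@[simp] theorem mul_b (p q : Heisenberg) : (p * q).b = p.b + q.b := rfl
@[simp] theorem mul_c (p q : Heisenberg) : (p * q).c = p.c + q.c + p.a * q.b := rfl
@[simp] theorem one_a : (1 : Heisenberg).a = 0 := rfl
@[simp] theorem one_b : (1 : Heisenberg).b = 0 := rfl
@[simp] theorem one_c : (1 : Heisenberg).c = 0 := rfl
@[simp] theorem inv_a (p : Heisenberg) : p⁻¹.a = -p.a := rfl
@[simp] theorem inv_b (p : Heisenberg) : p⁻¹.b = -p.b := rfl
@[simp] theorem inv_c (p : Heisenberg) : p⁻¹.c = -p.c + p.a * p.b := rfl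

instance : Group Heisenberg where
  mul_assoc p q r := by ext <;> simp <;> ring
  one_mul p := by ext <;> simp
  mul_one p := by ext <;> simp
  inv_mul_cancel p := by ext <;> simp

theorem pow_eq (p : Heisenberg) (k : ℕ) :
    p ^ k = ⟨k * p.a, k * p.b, k * p.c + k.choose 2 * (p.a * p.b)⟩ := by
  induction k with
  | zero => ext <;> simp
  | succ k ih =>
    rw [pow_succ, ih]
    ext <;> simp [Nat.choose_succ_succ] <;> ring

theorem zpow_eq_of_mul_eq_zero {p : Heisenberg} (hp : p.a * p.b = 0) (k : ℤ) :
    p ^ k = ⟨k * p.a, k * p.b, k * p.c⟩ := by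
  induction k using Int.induction_on with
  | zero => ext <;> simp
  | succ k ih => rw [zpow_add_one, ih]; ext <;> simp <;> grind
  | pred k ih => rw [zpow_sub_one, ih]; ext <;> simp <;> grind

theorem mem_center_iff {p : Heisenberg} : p ∈ Subgroup.center Heisenberg ↔ p.a = 0 ∧ p.b = 0 := by
  rw [Subgroup.mem_center_iff]
  constructor
  · intro h
    have hx := congrArg c (h ⟨1, 0, 0⟩)
    have hy := congrArg c (h ⟨0, 1, 0⟩)
    simp at hx hy
    omega
  · rintro ⟨ha, hb⟩ g
    ext <;> simp [ha, hb]
    ring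

theorem commutatorElement_mem_center (p q : Heisenberg) : ⁅p, q⁆ ∈ Subgroup.center Heisenberg := by
  rw [mem_center_iff, commutatorElement_def]
  simp

def lift {G : Type*} [Group G] (X Y : G) (hXY : ⁅X, Y⁆ ∈ Subgroup.center G) : Heisenberg →* G where
  toFun p := Y ^ p.b * X ^ p.a * ⁅X, Y⁆ ^ p.c
  map_one' := by simp
  map_mul' p q := by
    set T := ⁅X, Y⁆
    have hT : ∀ (k : ℤ) (x : G), T ^ k * x = x * T ^ k := fun k x =>
      (Subgroup.mem_center_iff.mp (zpow_mem hXY k) x).symm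
    have hswap : X ^ p.a * Y ^ q.b = T ^ (p.a * q.b) * (Y ^ q.b * X ^ p.a) := by
      rw [← commutatorElement_zpow_zpow_of_mem_center hXY, commutatorElement_def]; group
    symm
    calc Y ^ p.b * X ^ p.a * T ^ p.c * (Y ^ q.b * X ^ q.a * T ^ q.c)
        = Y ^ p.b * X ^ p.a * (T ^ p.c * (Y ^ q.b * X ^ q.a)) * T ^ q.c := by group
      _ = Y ^ p.b * (X ^ p.a * Y ^ q.b) * X ^ q.a * (T ^ p.c * T ^ q.c) := by rw [hT]; group
      _ = Y ^ p.b * (T ^ (p.a * q.b) * (Y ^ q.b * X ^ p.a * X ^ q.a)) * (T ^ p.c * T ^ q.c) := by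
          rw [hswap]; group
      _ = Y ^ (p.b + q.b) * X ^ (p.a + q.a) * T ^ (p.c + q.c + p.a * q.b) := by rw [hT]; group

theorem dvd_of_mem_powersClosure {n : ℕ} {p : Heisenberg} (hp : p ∈ powersClosure Heisenberg n) :
    (n : ℤ) ∣ p.a ∧ (n : ℤ) ∣ p.b ∧ (n.gcd (n.choose 2) : ℤ) ∣ p.c := by
  have hln : (n.gcd (n.choose 2) : ℤ) ∣ n := Int.natCast_dvd_natCast.mpr (Nat.gcd_dvd_left _ _)
  have hlC : (n.gcd (n.choose 2) : ℤ) ∣ n.choose 2 :=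
    Int.natCast_dvd_natCast.mpr (Nat.gcd_dvd_right _ _)
  induction hp using Subgroup.closure_induction with
  | mem _ hq =>
    obtain ⟨r, rfl⟩ := hq
    rw [pow_eq]
    exact ⟨dvd_mul_right _ _, dvd_mul_right _ _, dvd_add (hln.mul_right _) (hlC.mul_right _)⟩
  | one => simp
  | mul q r _ _ hq hr =>
    exact ⟨dvd_add hq.1 hr.1, dvd_add hq.2.1 hr.2.1,
      dvd_add (dvd_add hq.2.2 hr.2.2) ((hln.trans hq.1).mul_right _)⟩
  | inv q _ hq =>
    exact ⟨dvd_neg.mpr hq.1, dvd_neg.mpr hq.2.1,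
      dvd_add (dvd_neg.mpr hq.2.2) ((hln.trans hq.1).mul_right _)⟩

theorem mk_zero_zero_mem_powersClosure {n : ℕ} {c : ℤ} (hc : (n.gcd (n.choose 2) : ℤ) ∣ c) :
    (⟨0, 0, c⟩ : Heisenberg) ∈ powersClosure Heisenberg n := by
  have hpow : ∀ r : Heisenberg, r ^ n ∈ powersClosure Heisenberg n := fun r =>
    Subgroup.subset_closure ⟨r, rfl⟩
  have hn : (⟨0, 0, n⟩ : Heisenberg) ∈ powersClosure Heisenberg n := by
    convert hpow ⟨0, 0, 1⟩ using 1
    ext <;> simp [pow_eq]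
  have hC : (⟨0, 0, n.choose 2⟩ : Heisenberg) ∈ powersClosure Heisenberg n := by
    convert mul_mem (hpow ⟨1, 1, 0⟩) (inv_mem (mul_mem (hpow ⟨0, 1, 0⟩) (hpow ⟨1, 0, 0⟩))) using 1
    ext <;> simp [pow_eq]
  obtain ⟨k, rfl⟩ := hc
  have hbezout : (n.gcd (n.choose 2) : ℤ) =
      n * Int.gcdA n (n.choose 2) + n.choose 2 * Int.gcdB n (n.choose 2) := by
    rw [← Int.gcd_eq_gcd_ab, Int.gcd_natCast_natCast]
  convert mul_mem (zpow_mem hn (Int.gcdA n (n.choose 2) * k))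
    (zpow_mem hC (Int.gcdB n (n.choose 2) * k)) using 1
  ext <;> simp [zpow_eq_of_mul_eq_zero, hbezout]
  ring

theorem mem_powersClosure_iff {n : ℕ} {p : Heisenberg} :
    p ∈ powersClosure Heisenberg n ↔
      (n : ℤ) ∣ p.a ∧ (n : ℤ) ∣ p.b ∧ (n.gcd (n.choose 2) : ℤ) ∣ p.c := by
  refine ⟨dvd_of_mem_powersClosure, ?_⟩
  rintro ⟨⟨a, ha⟩, ⟨b, hb⟩, hc⟩
  convert mul_mem (mul_mem (mk_zero_zero_mem_powersClosure hc) (Subgroup.subset_closure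
    ⟨⟨0, b, 0⟩, rfl⟩)) (Subgroup.subset_closure ⟨⟨a, 0, 0⟩, rfl⟩) using 1
  ext <;> simp [pow_eq, ha, hb]

theorem index_eq_of_mem_iff {S : Subgroup Heisenberg} {n l : ℕ} (hln : l ∣ n)
    (hS : ∀ p, p ∈ S ↔ (n : ℤ) ∣ p.a ∧ (n : ℤ) ∣ p.b ∧ (l : ℤ) ∣ p.c) :
    S.index = n * n * l := by
  let f : Heisenberg → ZMod n × ZMod n × ZMod l := fun p => (p.a, p.b, p.c)
  have hf : Function.Surjective f := by
    rintro ⟨x, y, z⟩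
    obtain ⟨a, rfl⟩ := ZMod.intCast_surjective x
    obtain ⟨b, rfl⟩ := ZMod.intCast_surjective y
    obtain ⟨c, rfl⟩ := ZMod.intCast_surjective z
    exact ⟨⟨a, b, c⟩, rfl⟩
  have hrel : ∀ p q, QuotientGroup.leftRel S p q ↔ Setoid.ker f p q := by
    intro p q
    have hln' : (l : ℤ) ∣ n := Int.natCast_dvd_natCast.mpr hln
    rw [QuotientGroup.leftRel_apply, hS, Setoid.ker_def]
    simp only [f, Prod.mk.injEq, ZMod.intCast_eq_intCast_iff_dvd_sub, mul_a, mul_b, mul_c, inv_a,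
      inv_b, inv_c]
    rw [neg_add_eq_sub, neg_add_eq_sub]
    refine and_congr_right fun _ => and_congr_right fun hb => ?_
    rw [show -p.c + p.a * p.b + q.c + -p.a * q.b = q.c - p.c + -p.a * (q.b - p.b) by ring,
      dvd_add_left ((hln'.trans hb).mul_left _)]
  change Nat.card (Quotient (QuotientGroup.leftRel S)) = _
  rw [Nat.card_congr ((Quotient.congrRight hrel).trans
    (Setoid.quotientKerEquivOfSurjective f hf)), Nat.card_prod, Nat.card_prod, Nat.card_zmod,
    Nat.card_zmod, mul_assoc]

end Heisenberg

def toHeisenberg : F2 →* Heisenberg := FreeGroup.lift fun b => if b then ⟨1, 0, 0⟩ else ⟨0, 1, 0⟩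

@[simp] theorem toHeisenberg_xx : toHeisenberg xx = ⟨1, 0, 0⟩ := by simp [toHeisenberg, xx]

@[simp] theorem toHeisenberg_yy : toHeisenberg yy = ⟨0, 1, 0⟩ := by simp [toHeisenberg, yy]

@[simp] theorem toHeisenberg_commutatorElement : toHeisenberg ⁅xx, yy⁆ = ⟨0, 0, 1⟩ := by
  rw [map_commutatorElement, commutatorElement_def]; ext <;> simp

theorem toHeisenberg_commutatorElement_zpow (m : ℤ) :
    toHeisenberg (⁅xx, yy⁆ ^ m) = ⟨0, 0, m⟩ := by
  rw [map_zpow, toHeisenberg_commutatorElement, Heisenberg.zpow_eq_of_mul_eq_zero (by simp)]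
  simp

theorem commutatorElement_xx_yy_mem_commutator : ⁅xx, yy⁆ ∈ commutator F2 := by
  rw [commutator_def]; exact Subgroup.commutator_mem_commutator trivial trivial

theorem toHeisenberg_surjective : Function.Surjective toHeisenberg := by
  intro p
  refine ⟨yy ^ p.b * xx ^ p.a * ⁅xx, yy⁆ ^ p.c, ?_⟩
  simp only [map_mul, map_zpow, toHeisenberg_xx, toHeisenberg_yy, toHeisenberg_commutatorElement]
  ext <;> simp [Heisenberg.zpow_eq_of_mul_eq_zero]

theorem toHeisenberg_mem_center {z : F2} (hz : z ∈ commutator F2) :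
    toHeisenberg z ∈ Subgroup.center Heisenberg := by
  have hle : commutator F2 ≤ (Subgroup.center Heisenberg).comap toHeisenberg := by
    rw [commutator_def, Subgroup.commutator_le]
    intro p _ q _
    rw [Subgroup.mem_comap, map_commutatorElement]
    exact Heisenberg.commutatorElement_mem_center _ _
  exact hle hz

theorem toHeisenberg_eq_of_mem_commutator {z : F2} (hz : z ∈ commutator F2) :
    toHeisenberg z = ⟨0, 0, (toHeisenberg z).c⟩ := by
  obtain ⟨ha, hb⟩ := Heisenberg.mem_center_iff.mp (toHeisenberg_mem_center hz)
  ext <;> simp [ha, hb]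

theorem ker_toHeisenberg : toHeisenberg.ker = (⊤ : Subgroup F2).lowerCentralSeries 2 := by
  apply le_antisymm
  · set N := (⊤ : Subgroup F2).lowerCentralSeries 2
    have hsection : (Heisenberg.lift (QuotientGroup.mk' N xx) (QuotientGroup.mk' N yy)
        (QuotientGroup.commutatorElement_mem_center_of_lowerCentralSeries_two _ _)).comp
          toHeisenberg = QuotientGroup.mk' N := by
      refine FreeGroup.ext_hom _ _ fun b => ?_
      cases b <;> simp [Heisenberg.lift, toHeisenberg, xx, yy]
    intro z hz
    rw [← QuotientGroup.ker_mk' N, ← hsection, MonoidHom.mem_ker, MonoidHom.comp_apply,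
      MonoidHom.mem_ker.mp hz, map_one]
  · show ⁅commutator F2, ⊤⁆ ≤ _
    rw [Subgroup.commutator_le]
    intro p hp q _
    rw [MonoidHom.mem_ker, map_commutatorElement, commutatorElement_eq_one_iff_commute]
    exact (Subgroup.mem_center_iff.mp (toHeisenberg_mem_center hp) _).symm

theorem comap_toHeisenberg_powersClosure (n : ℕ) :
    (powersClosure Heisenberg n).comap toHeisenberg =
      (⊤ : Subgroup F2).lowerCentralSeries 2 ⊔ pw n := by
  rw [← map_powersClosure_of_surjective toHeisenberg_surjective, Subgroup.comap_map_eq,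
    ker_toHeisenberg, sup_comm]
  rfl

theorem eq_toHeisenberg_c_of_conj_invariant (f : commutator F2 → ℤ)
    (hmul : ∀ z w, f (z * w) = f z + f w)
    (hconj : ∀ (u : F2) (z : commutator F2) (h : u * ↑z * u⁻¹ ∈ commutator F2),
      f ⟨u * ↑z * u⁻¹, h⟩ = f z)
    (ht : ∀ h : ⁅xx, yy⁆ ∈ commutator F2, f ⟨⁅xx, yy⁆, h⟩ = 1) (z : commutator F2) :
    f z = (toHeisenberg z).c := by
  let φ : commutator F2 →* Multiplicative ℤ :=
    MonoidHom.mk' (fun z => .ofAdd (f z)) fun z w => by rw [hmul, ofAdd_add]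
  let t : commutator F2 := ⟨⁅xx, yy⁆, commutatorElement_xx_yy_mem_commutator⟩
  set c := (toHeisenberg z).c
  have hrest : (↑(z * (t ^ c)⁻¹) : F2) ∈ ⁅commutator F2, (⊤ : Subgroup F2)⁆ := by
    show _ ∈ (⊤ : Subgroup F2).lowerCentralSeries 2
    rw [← ker_toHeisenberg, MonoidHom.mem_ker, Subgroup.coe_mul, Subgroup.coe_inv,
      SubgroupClass.coe_zpow, map_mul, map_inv, toHeisenberg_commutatorElement_zpow,
      toHeisenberg_eq_of_mem_commutator z.2, mul_inv_cancel]
  have hφz : φ z = φ t ^ c := by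
    rw [← inv_mul_cancel_right z (t ^ c), map_mul, map_eq_one_of_mem_commutator_top φ hconj hrest,
      one_mul, map_zpow]
  change Multiplicative.toAdd (φ z) = c
  rw [hφz, toAdd_zpow]
  change c • f t = c
  rw [ht, smul_eq_mul, mul_one]

theorem area_invariant_free_nilpotent_general
    (W : commutator F2 → L)
    (hadd : ∀ z w : commutator F2, W (z * w) = W z + W w)
    (hcomm : ∀ h : ⁅xx, yy⁆ ∈ commutator F2, W ⟨⁅xx, yy⁆, h⟩ = 1)
    (hconj : ∀ (u : F2) (z : commutator F2) (h : u * ↑z * u⁻¹ ∈ commutator F2),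
      W ⟨u * ↑z * u⁻¹, h⟩ = mono (expx u) (expy u) * W z)
    (A : commutator F2 → ℤ)
    (hA : ∀ z : commutator F2, A z = Finsupp.sum (W z).coeff fun _ a => a)
    (n : ℕ) (l : ℕ) (hl : l = if Even n then n / 2 else n) :
    Function.Surjective (fun z : commutator F2 => ((A z : ℤ) : ZMod l)) ∧
    (∀ z : commutator F2,
      ((A z : ℤ) : ZMod l) = 0 ↔ (z : F2) ∈ Subgroup.lowerCentralSeries (⊤ : Subgroup F2) 2 ⊔ pw n) ∧
    Nat.card (F2 ⧸ (Subgroup.lowerCentralSeries (⊤ : Subgroup F2) 2 ⊔ pw n)) =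
      (if Even n then n ^ 3 / 2 else n ^ 3) := by
  rw [← Nat.gcd_self_choose_two] at hl
  subst hl
  let augmentation : L →ₐ[ℤ] ℤ := AddMonoidAlgebra.lift ℤ ℤ (ℤ × ℤ) 1
  have hAW : ∀ z, A z = augmentation (W z) := fun z => by
    simp [hA, augmentation, AddMonoidAlgebra.lift_apply]
  have hAc : ∀ z, A z = (toHeisenberg z).c := by
    refine eq_toHeisenberg_c_of_conj_invariant A (fun z w => ?_) (fun u z h => ?_) (fun h => ?_)
    · rw [hAW, hadd, map_add, ← hAW, ← hAW]
    · rw [hAW, hconj, map_mul, mono, AddMonoidAlgebra.lift_single, one_smul, MonoidHom.one_apply,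
        one_mul, ← hAW]
    · rw [hAW, hcomm, map_one]
  refine ⟨fun c => ?_, fun z => ?_, ?_⟩
  · obtain ⟨m, rfl⟩ := ZMod.intCast_surjective c
    refine ⟨⟨⁅xx, yy⁆ ^ m, zpow_mem commutatorElement_xx_yy_mem_commutator m⟩, ?_⟩
    simp [hAc, toHeisenberg_commutatorElement_zpow]
  · rw [ZMod.intCast_zmod_eq_zero_iff_dvd, ← comap_toHeisenberg_powersClosure, Subgroup.mem_comap,
      Heisenberg.mem_powersClosure_iff, toHeisenberg_eq_of_mem_commutator z.2, hAc]
    simp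
  · rw [← comap_toHeisenberg_powersClosure, ← Subgroup.index,
      Subgroup.index_comap_of_surjective _ toHeisenberg_surjective,
      Heisenberg.index_eq_of_mem_iff (Nat.gcd_dvd_left _ _)
        fun _ => Heisenberg.mem_powersClosure_iff,
      Nat.mul_self_mul_gcd_choose_two]

/-- The area invariant `A(z) = P_z(1,1)` induces an isomorphism
from `N(2,n)' = F₂'/(γ₃(F₂)F₂ⁿ ∩ F₂')` onto `Z_l`, where `l = n/2` for `n` even
and `l = n` for `n` odd: the map `z ↦ A(z) mod l` on `F₂'` is surjective with
kernel `(γ₃(F₂)F₂ⁿ) ∩ F₂'`.  Consequently `|N(2,n)| = n³/2` for even `n` and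
`n³` for odd `n`. -/
theorem area_invariant_free_nilpotent
    (W : commutator F2 → L)
    (hadd : ∀ z w : commutator F2, W (z * w) = W z + W w)
    (hcomm : ∀ h : ⁅xx, yy⁆ ∈ commutator F2, W ⟨⁅xx, yy⁆, h⟩ = 1)
    (hconj : ∀ (u : F2) (z : commutator F2) (h : u * ↑z * u⁻¹ ∈ commutator F2),
      W ⟨u * ↑z * u⁻¹, h⟩ = mono (expx u) (expy u) * W z)
    (A : commutator F2 → ℤ)
    (hA : ∀ z : commutator F2, A z = Finsupp.sum (W z).coeff fun _ a => a)
    (n : ℕ) (hn : 1 ≤ n) (l : ℕ) (hl : l = if Even n then n / 2 else n) :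
    Function.Surjective (fun z : commutator F2 => ((A z : ℤ) : ZMod l)) ∧
    (∀ z : commutator F2,
      ((A z : ℤ) : ZMod l) = 0 ↔ (z : F2) ∈ Subgroup.lowerCentralSeries (⊤ : Subgroup F2) 2 ⊔ pw n) ∧
    Nat.card (F2 ⧸ (Subgroup.lowerCentralSeries (⊤ : Subgroup F2) 2 ⊔ pw n)) =
      (if Even n then n ^ 3 / 2 else n ^ 3) :=
  area_invariant_free_nilpotent_general W hadd hcomm hconj A hA n l hl
end

section
/- For every even positive integer n, the element [x,y]^{n/2} lies in γ₃(F₂) F₂ⁿ, where F₂ is the free group on x and y. -/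
open scoped commutatorElement

/-!
Modulo `N = γ₃(G) Gⁿ` with `n = 2m`, commutators are central and every element has order
dividing `n`. The class-two expansion `(ab)ⁿ = aⁿ bⁿ [b,a]^(n choose 2)` then forces
`[b,a]^(m(2m-1)) = 1`, and together with `[b,a]^(2m) = 1` this gives `[b,a]^m = 1`, since
`m + m(2m-1) = 2m·m`.
-/

section ClassTwo

variable {G : Type*} [Group G] {a b : G}

theorem pow_mul_eq_mul_pow_mul_commutatorElement_pow (ha : Commute ⁅b, a⁆ a)
    (hb : Commute ⁅b, a⁆ b) (k : ℕ) : b ^ k * a = a * b ^ k * ⁅b, a⁆ ^ k := by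
  have hba : b * a = a * b * ⁅b, a⁆ := by
    rw [← (ha.mul_right hb).eq, commutatorElement_def]; group
  generalize ⁅b, a⁆ = c at *
  induction k with
  | zero => simp
  | succ k ih =>
    calc b ^ (k + 1) * a = b * a * b ^ k * c ^ k := by rw [pow_succ', mul_assoc, ih]; group
      _ = a * b * (c * b ^ k) * c ^ k := by rw [hba]; group
      _ = a * b ^ (k + 1) * c ^ (k + 1) := by rw [(hb.pow_right k).eq]; group

theorem mul_pow_of_commute_commutatorElement (ha : Commute ⁅b, a⁆ a)
    (hb : Commute ⁅b, a⁆ b) (m : ℕ) : (a * b) ^ m = a ^ m * b ^ m * ⁅b, a⁆ ^ m.choose 2 := by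
  induction m with
  | zero => simp
  | succ m ih =>
    have hbma := pow_mul_eq_mul_pow_mul_commutatorElement_pow ha hb m
    generalize ⁅b, a⁆ = c at *
    calc (a * b) ^ (m + 1) = a ^ m * b ^ m * (c ^ m.choose 2 * a) * b := by
          rw [pow_succ, ih]; group
      _ = a ^ m * (b ^ m * a) * (c ^ m.choose 2 * b) := by rw [(ha.pow_left _).eq]; group
      _ = a ^ (m + 1) * b ^ m * (c ^ (m + m.choose 2) * b) := by rw [hbma]; group
      _ = a ^ (m + 1) * b ^ (m + 1) * c ^ (m + 1).choose 2 := by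
          rw [(hb.pow_left _).eq, Nat.choose_succ_succ', Nat.choose_one_right, add_comm m]; group

theorem Nat.add_two_mul_choose_two (m : ℕ) : m + (2 * m).choose 2 = 2 * m * m := by
  induction m with
  | zero => rfl
  | succ m ih =>
    rw [show 2 * (m + 1) = 2 * m + 1 + 1 by ring, Nat.choose_succ_succ', Nat.choose_one_right,
      Nat.choose_succ_succ', Nat.choose_one_right]
    linear_combination ih

theorem commutatorElement_pow_eq_one_of_pow_two_mul_eq_one
    (hcent : ∀ g h k : G, Commute ⁅g, h⁆ k) {m : ℕ} (hexp : ∀ g : G, g ^ (2 * m) = 1) (a b : G) :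
    ⁅a, b⁆ ^ m = 1 := by
  have hchoose : ⁅b, a⁆ ^ (2 * m).choose 2 = 1 := by
    have hexpand := mul_pow_of_commute_commutatorElement (hcent b a a) (hcent b a b) (2 * m)
    simpa [hexp] using hexpand.symm
  have hm : ⁅b, a⁆ ^ m = 1 :=
    calc ⁅b, a⁆ ^ m = ⁅b, a⁆ ^ m * ⁅b, a⁆ ^ (2 * m).choose 2 := by rw [hchoose, mul_one]
      _ = (⁅b, a⁆ ^ (2 * m)) ^ m := by rw [← pow_add, Nat.add_two_mul_choose_two, pow_mul]
      _ = 1 := by rw [hexp, one_pow]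
  rw [← commutatorElement_inv, inv_pow, hm, inv_one]

end ClassTwo

theorem Subgroup.closure_pow_normal (G : Type*) [Group G] (n : ℕ) :
    (Subgroup.closure {g : G | ∃ h : G, h ^ n = g}).Normal := by
  rw [← Subgroup.normalizer_eq_top_iff, eq_top_iff, Subgroup.le_normalizer_closure_iff]
  rintro g - _ ⟨h, rfl⟩
  exact Subgroup.subset_closure ⟨g * h * g⁻¹, conj_pow⟩

theorem QuotientGroup.commute_commutatorElement {G : Type*} [Group G] {N : Subgroup G} [N.Normal]
    (hN : (⊤ : Subgroup G).lowerCentralSeries 2 ≤ N) (g h k : G ⧸ N) : Commute ⁅g, h⁆ k := by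
  induction g using QuotientGroup.induction_on
  induction h using QuotientGroup.induction_on
  induction k using QuotientGroup.induction_on
  have hmk := map_commutatorElement (QuotientGroup.mk' N)
  simp only [QuotientGroup.mk'_apply] at hmk
  rw [← commutatorElement_eq_one_iff_commute, ← hmk, ← hmk, QuotientGroup.eq_one_iff]
  exact hN (Subgroup.commutator_mem_commutator
    (Subgroup.commutator_mem_commutator (Subgroup.mem_top _) (Subgroup.mem_top _))
    (Subgroup.mem_top _))

theorem commutatorElement_pow_mem_of_lowerCentralSeries_le {G : Type*} [Group G]
    {N : Subgroup G} [N.Normal] (hN : (⊤ : Subgroup G).lowerCentralSeries 2 ≤ N) {m : ℕ}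
    (hpow : ∀ g : G, g ^ (2 * m) ∈ N) (a b : G) : ⁅a, b⁆ ^ m ∈ N := by
  have hexp : ∀ g : G ⧸ N, g ^ (2 * m) = 1 := by
    rintro ⟨g⟩
    exact (QuotientGroup.eq_one_iff _).mpr (hpow g)
  rw [← QuotientGroup.eq_one_iff, QuotientGroup.mk_pow, ← QuotientGroup.mk'_apply,
    map_commutatorElement]
  exact commutatorElement_pow_eq_one_of_pow_two_mul_eq_one
    (QuotientGroup.commute_commutatorElement hN) hexp _ _

theorem commutator_half_power_mem_general (n : ℕ) (he : Even n) :
    (⁅xx, yy⁆ : F2) ^ (n / 2) ∈ (⊤ : Subgroup F2).lowerCentralSeries 2 ⊔ pw n := by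
  obtain ⟨m, rfl⟩ := even_iff_two_dvd.mp he
  have : (pw (2 * m)).Normal := Subgroup.closure_pow_normal F2 (2 * m)
  rw [Nat.mul_div_cancel_left m two_pos]
  refine commutatorElement_pow_mem_of_lowerCentralSeries_le le_sup_left (fun g ↦ ?_) _ _
  exact Subgroup.mem_sup_right (Subgroup.subset_closure ⟨g, rfl⟩)

/-- For every even positive integer `n`, `[x,y]^{n/2}` lies in
`γ₃(F₂)·F₂ⁿ` (here `γ₃(F₂) = lowerCentralSeries F₂ 2`). -/
theorem commutator_half_power_mem (n : ℕ) (hn : 0 < n) (he : Even n) :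
    (⁅xx, yy⁆ : F2) ^ (n / 2) ∈ (⊤ : Subgroup F2).lowerCentralSeries 2 ⊔ pw n :=
  commutator_half_power_mem_general n he
end

section
/- Let n = 2^k with k ≥ 2 and let Ω : F₂' → (Z_n)^n be the homomorphism given by the n/2 horizontal invariants h⁰, ..., h^{n/2−1} and the n/2 vertical invariants v⁰, ..., v^{n/2−1}. Then the image of Ω is a subgroup of (Z_n)^n of order exactly 2·(n/2)^n. -/
/-!
Write `v p ∈ (ℤ/n)^n` for the vector of signs (±1) that the `n/2` horizontal and `n/2`
vertical colourings give to the square `p`, so that `Ω z = ∑ₚ (P_z)ₚ • v p`. The winding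
invariant of `u [x, y] u⁻¹` is the monomial `X^a Y^b` with `(a, b)` the exponent sums of `u`,
so `z ↦ P_z` is onto and the image of `Ω` is the `ℤ`-span of the vectors `v p`. Each `v p` is
odd in every coordinate, so the span consists of vectors whose coordinates share one parity.
Conversely `v (0, a) - v (0, a - 1) = 2 eₐ` (and similarly for the columns) together with one
odd vector generate that subgroup, which is the preimage of the two constant vectors under
reduction mod 2 and has `2 (n/2)^n` elements.
-/

lemma ZMod.exists_eq_mul_of_castHom_eq_zero {n d : ℕ} [NeZero n] (hd : d ∣ n) {x : ZMod n}
    (hx : ZMod.castHom hd (ZMod d) x = 0) : ∃ c : ZMod n, x = d * c := by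
  rw [← ZMod.natCast_zmod_val x, map_natCast, ZMod.natCast_eq_zero_iff] at hx
  obtain ⟨c, hc⟩ := hx
  exact ⟨c, by rw [← ZMod.natCast_zmod_val x, hc, Nat.cast_mul]⟩

section SameParity

variable {ι : Type*} {n : ℕ} (h : 2 ∣ n)

def sameParity (ι : Type*) : AddSubgroup (ι → ZMod n) :=
  (Pi.constAddMonoidHom ι (ZMod 2)).range.comap
    ((ZMod.castHom h (ZMod 2)).toAddMonoidHom.compLeft ι)

lemma mem_sameParity {w : ι → ZMod n} :
    w ∈ sameParity h ι ↔ ∃ e : ZMod 2, ∀ j, ZMod.castHom h (ZMod 2) (w j) = e := by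
  simp [sameParity, funext_iff, eq_comm]

variable [Fintype ι] [NeZero n]

lemma card_sameParity [Nonempty ι] :
    Nat.card (sameParity h ι) = 2 * (n / 2) ^ Fintype.card ι := by
  set D := (Pi.constAddMonoidHom ι (ZMod 2)).range
  have hD : Nat.card D = 2 := by
    rw [← Nat.card_congr (AddMonoidHom.ofInjective (Function.const_injective (β := ZMod 2)
      (α := ι))).toEquiv, Nat.card_zmod]
  have hS : Nat.card (sameParity h ι) * D.index = n ^ Fintype.card ι := by
    have hπ : Function.Surjective ((ZMod.castHom h (ZMod 2)).toAddMonoidHom.compLeft ι) :=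
      (ZMod.castHom_surjective h).comp_left
    rw [← AddSubgroup.index_comap_of_surjective D hπ, sameParity.eq_def,
      AddSubgroup.card_mul_index, Nat.card_fun, Nat.card_zmod, Nat.card_eq_fintype_card]
  have hD_index : 2 * D.index = 2 ^ Fintype.card ι := by
    have := D.card_mul_index
    rwa [hD, Nat.card_fun, Nat.card_zmod, Nat.card_eq_fintype_card] at this
  have hI : 0 < D.index := by
    have : 0 < 2 ^ Fintype.card ι := by positivity
    omega
  obtain ⟨m, rfl⟩ := h
  refine Nat.eq_of_mul_eq_mul_right hI ?_
  rw [hS, Nat.mul_div_cancel_left m two_pos, mul_pow, mul_right_comm, ← hD_index]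

variable [DecidableEq ι] {A : AddSubgroup (ι → ZMod n)}

lemma mem_of_forall_castHom_eq_zero (hA : ∀ j, Pi.single j (2 : ZMod n) ∈ A)
    {w : ι → ZMod n} (hw : ∀ j, ZMod.castHom h (ZMod 2) (w j) = 0) : w ∈ A := by
  choose c hc using fun j => ZMod.exists_eq_mul_of_castHom_eq_zero h (hw j)
  have hw_sum : w = ∑ j, c j • Pi.single j (2 : ZMod n) := by
    conv_lhs => rw [← Finset.univ_sum_single w]
    refine Finset.sum_congr rfl fun j _ => ?_
    rw [← Pi.single_smul', hc j, smul_eq_mul, mul_comm, Nat.cast_ofNat]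
  rw [hw_sum, ← AddSubgroup.mem_toZModSubmodule n]
  exact Submodule.sum_mem _ fun j _ => Submodule.smul_mem _ _ (hA j)

lemma sameParity_le (hA : ∀ j, Pi.single j (2 : ZMod n) ∈ A) {u : ι → ZMod n} (hu : u ∈ A)
    (hu_odd : ∀ j, ZMod.castHom h (ZMod 2) (u j) = 1) : sameParity h ι ≤ A := by
  intro w hw
  obtain ⟨e, he⟩ := (mem_sameParity h).1 hw
  obtain rfl | rfl : e = 0 ∨ e = 1 := by generalize e = x; revert x; decide
  · exact mem_of_forall_castHom_eq_zero h hA he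
  · have hwu : w - u ∈ A := mem_of_forall_castHom_eq_zero h hA fun j => by
      rw [Pi.sub_apply, map_sub, he, hu_odd, sub_self]
    simpa using A.add_mem hwu hu

end SameParity

section Coloring

/-- `c_i` paints black (sign `1`) the rows `i, …, i + m - 1` modulo `n`. -/
def coloringSign (n m i : ℕ) (t : ℤ) : ZMod n :=
  if ((t : ZMod n) - (i : ZMod n)).val < m then 1 else -1

variable {n m : ℕ}

lemma coloringSign_eq (hn : n = 2 * m) {i : ℕ} {t : ℤ} (hi : i < m) (ht : -1 ≤ t)
    (ht' : t < m) : coloringSign n m i t = if (i : ℤ) ≤ t then 1 else -1 := by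
  have : NeZero n := ⟨by omega⟩
  have hval : (((t : ZMod n) - (i : ZMod n)).val : ℤ) =
      if (i : ℤ) ≤ t then t - i else t - i + n := by
    rw [← Int.cast_natCast i, ← Int.cast_sub, ZMod.val_intCast]
    split_ifs with hti
    · exact Int.emod_eq_of_lt (by omega) (by omega)
    · rw [← Int.add_emod_right]
      exact Int.emod_eq_of_lt (by omega) (by omega)
  unfold coloringSign
  refine if_congr ?_ rfl rfl
  split_ifs at hval <;> omega

lemma coloringSign_sub_coloringSign_pred (hn : n = 2 * m) {a i : ℕ} (ha : a < m) (hi : i < m) :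
    coloringSign n m i a - coloringSign n m i (a - 1) = if a = i then 2 else 0 := by
  rw [coloringSign_eq hn hi (by omega) (by omega), coloringSign_eq hn hi (by omega) (by omega)]
  split_ifs <;> first | omega | norm_num

lemma castHom_coloringSign (h : 2 ∣ n) (i : ℕ) (t : ℤ) :
    ZMod.castHom h (ZMod 2) (coloringSign n m i t) = 1 := by
  unfold coloringSign
  split_ifs
  · exact map_one _
  · rw [map_neg, map_one]
    decide

/-- The signs of the square `(a, b)` under the colourings of `h⁰, …` (row `b`) and of
`v⁰, …` (column `a`). -/
def colorVector (n m : ℕ) (p : ℤ × ℤ) : Fin m ⊕ Fin m → ZMod n :=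
  Sum.elim (fun i => coloringSign n m i p.2) (fun i => coloringSign n m i p.1)

lemma colorVector_sub_colorVector_inl (hn : n = 2 * m) (a : Fin m) :
    colorVector n m (0, a) - colorVector n m (0, a - 1) = Pi.single (.inl a) 2 := by
  funext j
  cases j with
  | inl i => simp [colorVector, Pi.single_apply, coloringSign_sub_coloringSign_pred hn a.2 i.2,
      Fin.val_inj, eq_comm]
  | inr i => simp [colorVector]

lemma colorVector_sub_colorVector_inr (hn : n = 2 * m) (a : Fin m) :
    colorVector n m (a, 0) - colorVector n m (a - 1, 0) = Pi.single (.inr a) 2 := by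
  funext j
  cases j with
  | inl i => simp [colorVector]
  | inr i => simp [colorVector, Pi.single_apply, coloringSign_sub_coloringSign_pred hn a.2 i.2,
      Fin.val_inj, eq_comm]

lemma linearCombination_colorVector_inl (f : ℤ × ℤ →₀ ℤ) (i : Fin m) :
    Finsupp.linearCombination ℤ (colorVector n m) f (.inl i) = f.sum fun p a =>
      if ((p.2 : ZMod n) - (i : ℕ)).val < m then (a : ZMod n) else -(a : ZMod n) := by
  rw [Finsupp.linearCombination_apply, Finsupp.sum, Finset.sum_apply]
  refine Finset.sum_congr rfl fun p _ => ?_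
  simp only [colorVector, coloringSign, Pi.smul_apply, Sum.elim_inl]
  split_ifs <;> simp

lemma linearCombination_colorVector_inr (f : ℤ × ℤ →₀ ℤ) (i : Fin m) :
    Finsupp.linearCombination ℤ (colorVector n m) f (.inr i) = f.sum fun p a =>
      if ((p.1 : ZMod n) - (i : ℕ)).val < m then (a : ZMod n) else -(a : ZMod n) := by
  rw [Finsupp.linearCombination_apply, Finsupp.sum, Finset.sum_apply]
  refine Finset.sum_congr rfl fun p _ => ?_
  simp only [colorVector, coloringSign, Pi.smul_apply, Sum.elim_inr]
  split_ifs <;> simp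

lemma span_range_colorVector (hn : n = 2 * m) (hm : 0 < m) :
    (Submodule.span ℤ (Set.range (colorVector n m))).toAddSubgroup =
      sameParity (Dvd.intro m hn.symm) (Fin m ⊕ Fin m) := by
  have : NeZero n := ⟨by omega⟩
  have hodd : ∀ p j, ZMod.castHom (Dvd.intro m hn.symm) (ZMod 2) (colorVector n m p j) = 1 := by
    intro p j
    cases j <;> exact castHom_coloringSign _ _ _
  rw [Submodule.span_int_eq_addSubgroupClosure]
  refine le_antisymm ((AddSubgroup.closure_le _).2 ?_) (sameParity_le _ ?_
    (AddSubgroup.subset_closure ⟨(0, 0), rfl⟩) (hodd (0, 0)))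
  · rintro _ ⟨p, rfl⟩
    exact (mem_sameParity _).2 ⟨1, hodd p⟩
  · have hsub : ∀ p q, colorVector n m p - colorVector n m q ∈
        AddSubgroup.closure (Set.range (colorVector n m)) := fun p q =>
      sub_mem (AddSubgroup.subset_closure ⟨p, rfl⟩) (AddSubgroup.subset_closure ⟨q, rfl⟩)
    rintro (a | a)
    · simpa only [colorVector_sub_colorVector_inl hn a] using hsub (0, a) (0, a - 1)
    · simpa only [colorVector_sub_colorVector_inr hn a] using hsub (a, 0) (a - 1, 0)

end Coloring

lemma expx_zpow_mul_zpow (a b : ℤ) : expx (xx ^ a * yy ^ b) = a := by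
  simp [expx, xx, yy]

lemma expy_zpow_mul_zpow (a b : ℤ) : expy (xx ^ a * yy ^ b) = b := by
  simp [expy, xx, yy]

open scoped commutatorElement

section Winding

variable {W : commutator F2 → L}

lemma exists_winding_eq_mono
    (hcomm : ∀ h : ⁅xx, yy⁆ ∈ commutator F2, W ⟨⁅xx, yy⁆, h⟩ = 1)
    (hconj : ∀ (u : F2) (z : commutator F2) (h : u * ↑z * u⁻¹ ∈ commutator F2),
      W ⟨u * ↑z * u⁻¹, h⟩ = mono (expx u) (expy u) * W z) (a b : ℤ) :
    ∃ z, W z = mono a b := by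
  have hmem : ⁅xx, yy⁆ ∈ commutator F2 :=
    Subgroup.commutator_mem_commutator (Subgroup.mem_top _) (Subgroup.mem_top _)
  let u := xx ^ a * yy ^ b
  refine ⟨⟨u * ⁅xx, yy⁆ * u⁻¹, Subgroup.Normal.conj_mem inferInstance _ hmem u⟩, ?_⟩
  rw [hconj u ⟨_, hmem⟩, hcomm hmem, mul_one, expx_zpow_mul_zpow, expy_zpow_mul_zpow]

lemma winding_surjective (hadd : ∀ z w : commutator F2, W (z * w) = W z + W w)
    (hcomm : ∀ h : ⁅xx, yy⁆ ∈ commutator F2, W ⟨⁅xx, yy⁆, h⟩ = 1)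
    (hconj : ∀ (u : F2) (z : commutator F2) (h : u * ↑z * u⁻¹ ∈ commutator F2),
      W ⟨u * ↑z * u⁻¹, h⟩ = mono (expx u) (expy u) * W z) :
    Function.Surjective W := by
  let W' : Additive (commutator F2) →+ L := AddMonoidHom.mk' (fun z => W z.toMul) hadd
  suffices ∀ f, f ∈ W'.range from fun f => (this f).imp fun _ => id
  intro f
  induction f using AddMonoidAlgebra.induction_linear with
  | zero => exact zero_mem _
  | add _ _ hf hg => exact add_mem hf hg
  | single p r =>
    obtain ⟨z, hz⟩ := exists_winding_eq_mono hcomm hconj p.1 p.2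
    have hsingle : AddMonoidAlgebra.single p r = r • mono p.1 p.2 := by
      simp [mono, AddMonoidAlgebra.smul_single]
    exact hsingle ▸ zsmul_mem (AddMonoidHom.mem_range.2 ⟨.ofMul z, hz⟩) r

end Winding

/-- For `n = 2^k`, `k ≥ 2`, the homomorphism
`Ω : F₂' → (Z_n)^n` given by the `n/2` horizontal invariants `h⁰,…,h^{n/2-1}`
and the `n/2` vertical invariants `v⁰,…,v^{n/2-1}` has image of order exactly
`2·(n/2)^n`. -/
theorem omega_image_order
    (W : commutator F2 → L)
    (hadd : ∀ z w : commutator F2, W (z * w) = W z + W w)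
    (hcomm : ∀ h : ⁅xx, yy⁆ ∈ commutator F2, W ⟨⁅xx, yy⁆, h⟩ = 1)
    (hconj : ∀ (u : F2) (z : commutator F2) (h : u * ↑z * u⁻¹ ∈ commutator F2),
      W ⟨u * ↑z * u⁻¹, h⟩ = mono (expx u) (expy u) * W z)
    (k : ℕ) (hk : 2 ≤ k)
    (Ω : commutator F2 →
      (Fin (2 ^ (k - 1)) → ZMod (2 ^ k)) × (Fin (2 ^ (k - 1)) → ZMod (2 ^ k)))
    (hΩ : ∀ z : commutator F2, Ω z =
      (fun (i : Fin (2 ^ (k - 1))) => Finsupp.sum (W z).coeff fun p a =>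
        if (((p.2 : ZMod (2 ^ k)) - ((i : ℕ) : ZMod (2 ^ k)))).val < 2 ^ (k - 1)
        then (a : ZMod (2 ^ k)) else -(a : ZMod (2 ^ k)),
       fun (i : Fin (2 ^ (k - 1))) => Finsupp.sum (W z).coeff fun p a =>
        if (((p.1 : ZMod (2 ^ k)) - ((i : ℕ) : ZMod (2 ^ k)))).val < 2 ^ (k - 1)
        then (a : ZMod (2 ^ k)) else -(a : ZMod (2 ^ k)))) :
    Nat.card (Set.range Ω) = 2 * (2 ^ (k - 1)) ^ (2 ^ k) := by
  have hn : 2 ^ k = 2 * 2 ^ (k - 1) := by rw [← pow_succ']; congr; omega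
  have hΩ_eq : Ω = Equiv.sumArrowEquivProdArrow _ _ _ ∘
      Finsupp.linearCombination ℤ (colorVector (2 ^ k) (2 ^ (k - 1))) ∘
        AddMonoidAlgebra.coeff ∘ W := by
    funext z
    rw [hΩ z]
    ext i
    exacts [(linearCombination_colorVector_inl _ i).symm,
      (linearCombination_colorVector_inr _ i).symm]
  have hsurj : Function.Surjective (AddMonoidAlgebra.coeff ∘ W) :=
    AddMonoidAlgebra.coeffAddEquiv.surjective.comp (winding_surjective hadd hcomm hconj)
  have hrange : Set.range Ω = Equiv.sumArrowEquivProdArrow _ _ _ ''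
      (Submodule.span ℤ (Set.range (colorVector (2 ^ k) (2 ^ (k - 1)))) : Set _) := by
    rw [hΩ_eq, Set.range_comp, hsurj.range_comp, ← LinearMap.coe_range,
      Finsupp.range_linearCombination]
  have hhalf : 2 ^ k / 2 = 2 ^ (k - 1) := by omega
  rw [hrange, Nat.card_image_of_injective (Equiv.injective _)]
  change Nat.card (Submodule.span ℤ _).toAddSubgroup = _
  rw [span_range_colorVector hn (by positivity), card_sameParity, Fintype.card_sum,
    Fintype.card_fin, hhalf, ← two_mul, ← hn]
end
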